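/- arXiv:0911.4171 — 8 statements merged into one kernel-verified Lean document; each statement's English description precedes it below -/
import Mathlib

section
/- Let P be a bipartite box on finite sets 𝒳,𝒴,𝒰,𝒱, let 𝒵 and 𝒲 be finite sets, and for each w ∈ 𝒲 let {(p^{w,z}, P^{w,z})}_{z∈𝒵} be a box partition of P. Define P'(x,y,z|u,v,w) := p^{w,z} · P^{w,z}(x,y|u,v). Then P' is a tripartite box: it is nonnegative, ∑_{x,y,z} P'(x,y,z|u,v,w) = 1 for all (u,v,w), it is non-signaling in each coordinate (∑_x P'(x,y,z|u,v,w) is independent of u, ∑_y P'(x,y,z|u,v,w) is independent of v, ∑_z P'(x,y,z|u,v,w) is independent of w), and its marginal satisfies ∑_z P'(x,y,z|u,v,w) = P(x,y|u,v) for every w. -/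
/-- A bipartite box: nonnegative, normalized, non-signaling in both directions. -/
def IsBox {X Y U V : Type*} [Fintype X] [Fintype Y]
    (Q : X → Y → U → V → ℝ) : Prop :=
  (∀ x y u v, 0 ≤ Q x y u v) ∧
  (∀ u v, ∑ x, ∑ y, Q x y u v = 1) ∧
  (∀ y u u' v, ∑ x, Q x y u v = ∑ x, Q x y u' v) ∧
  (∀ x u v v', ∑ y, Q x y u v = ∑ y, Q x y u v')

/-- a family of box partitions of a bipartite box `P`, indexed by `w ∈ 𝒲`,
defines a tripartite box `P'(x,y,z|u,v,w) := p^{w,z} · P^{w,z}(x,y|u,v)` which is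
non-signaling in every coordinate and has marginal `P`. -/
theorem box_partitions_give_tripartite_box
    {X Y U V Z W : Type*} [Fintype X] [Fintype Y] [Fintype Z]
    (P : X → Y → U → V → ℝ) (hP : IsBox P)
    (p : W → Z → ℝ) (Q : W → Z → X → Y → U → V → ℝ)
    (hp : ∀ w z, 0 ≤ p w z) (hQ : ∀ w z, IsBox (Q w z))
    (hpart : ∀ w x y u v, ∑ z, p w z * Q w z x y u v = P x y u v) :
    -- nonnegativity
    (∀ x y z u v w, 0 ≤ p w z * Q w z x y u v) ∧
    -- normalization
    (∀ u v w, ∑ x, ∑ y, ∑ z, p w z * Q w z x y u v = 1) ∧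
    -- non-signaling in the first coordinate
    (∀ y z u u' v w, ∑ x, p w z * Q w z x y u v = ∑ x, p w z * Q w z x y u' v) ∧
    -- non-signaling in the second coordinate
    (∀ x z u v v' w, ∑ y, p w z * Q w z x y u v = ∑ y, p w z * Q w z x y u v') ∧
    -- non-signaling in the third coordinate
    (∀ x y u v w w', ∑ z, p w z * Q w z x y u v = ∑ z, p w' z * Q w' z x y u v) ∧
    -- the marginal is P for every w
    (∀ x y u v w, ∑ z, p w z * Q w z x y u v = P x y u v) := by
  refine ⟨fun x y z u v w => mul_nonneg (hp w z) ((hQ w z).1 x y u v),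
    fun u v w => ?_, fun y z u u' v w => ?_, fun x z u v v' w => ?_,
    fun x y u v w w' => by rw [hpart, hpart], fun x y u v w => hpart w x y u v⟩
  · simp only [hpart]; exact hP.2.1 u v
  · rw [← Finset.mul_sum, ← Finset.mul_sum, (hQ w z).2.2.1 y u u' v]
  · rw [← Finset.mul_sum, ← Finset.mul_sum, (hQ w z).2.2.2 x u v v']
end

section
/- Let P be a binary bipartite box and for each input pair (u,v) ∈ {0,1}² let ε_{uv} := ∑_{(x,y) : x⊕y ≠ u·v} P(x,y|u,v) denote its probability of violating the CHSH condition on input (u,v). Then for every output value x ∈ {0,1} and every input (u,v) ∈ {0,1}², the marginal output probability satisfies ∑_{y∈{0,1}} P(x,y|u,v) ≤ 1/2 + (ε_{00} + ε_{01} + ε_{10} + ε_{11})/2. -/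
/-- A binary bipartite box: nonnegative, normalized, non-signaling in both directions. -/
def BinBox (Q : Bool → Bool → Bool → Bool → ℝ) : Prop :=
  (∀ x y u v, 0 ≤ Q x y u v) ∧
  (∀ u v, ∑ x, ∑ y, Q x y u v = 1) ∧
  (∀ y u u' v, ∑ x, Q x y u v = ∑ x, Q x y u' v) ∧
  (∀ x u v v', ∑ y, Q x y u v = ∑ y, Q x y u v')

/-- The probability that the box violates the CHSH condition `x ⊕ y = u ∧ v` on input `(u,v)`. -/
def chshErr (P : Bool → Bool → Bool → Bool → ℝ) (u v : Bool) : ℝ :=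
  ∑ x, ∑ y, if xor x y ≠ (u && v) then P x y u v else 0

/-- for a binary bipartite box, every marginal output probability is at most
`1/2 + (ε₀₀ + ε₀₁ + ε₁₀ + ε₁₁)/2` where `ε_{uv}` is the CHSH error on input `(u,v)`. -/
theorem marginal_bias_le_half_add_chsh_errors
    (P : Bool → Bool → Bool → Bool → ℝ) (hP : BinBox P) :
    ∀ x u v, ∑ y, P x y u v ≤
      1/2 + (chshErr P false false + chshErr P false true
              + chshErr P true false + chshErr P true true) / 2 := by
  obtain ⟨h0, h1, h2, h3⟩ := hP
  simp only [Fintype.sum_bool] at h1 h2 h3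
  intro x u v
  cases x <;> cases u <;> cases v <;>
    simp only [chshErr, Fintype.sum_bool] <;> norm_num <;>
    linarith [h0 false false false false, h0 false false false true, h0 false false true false, h0 false false true true, h0 false true false false, h0 false true false true, h0 false true true false, h0 false true true true, h0 true false false false, h0 true false false true, h0 true false true false, h0 true false true true, h0 true true false false, h0 true true false true, h0 true true true false, h0 true true true true, h1 false false, h1 false true, h1 true false, h1 true true, h2 false false false false, h2 false false false true, h2 false false true false, h2 false false true true, h2 false true false false, h2 false true false true, h2 false true true false, h2 false true true true, h2 true false false false, h2 true false false true, h2 true false true false, h2 true false true true, h2 true true false false, h2 true true false true, h2 true true true false, h2 true true true true, h3 false false false false, h3 false false false true, h3 false false true false, h3 false false true true, h3 false true false false, h3 false true false true, h3 false true true false, h3 false true true true, h3 true false false false, h3 true false false true, h3 true false true false, h3 true false true true, h3 true true false false, h3 true true false true, h3 true true true false, h3 true true true true]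
end

section
/- Let P be a binary bipartite box with average CHSH error ε := 1 − (1/4)·∑_{u,v∈{0,1}} ∑_{(x,y) : x⊕y = u·v} P(x,y|u,v). Then for every box partition {(p^z, P^z)}_{z∈𝒵} of P and every fixed input (u,v) ∈ {0,1}²: ∑_{z∈𝒵} p^z · |∑_{y∈{0,1}} P^z(0,y|u,v) − 1/2| ≤ 2ε. (In the paper's terminology, the distance from uniform of Alice's output X given Eve's knowledge Z(W) and Q = (U=u, V=v) is at most 2ε.) -/
set_option maxHeartbeats 1000000 in
/-- Single-box version: the bias of Alice's marginal is at most twice the CHSH error. -/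
lemma single_box_chsh (Q : Bool → Bool → Bool → Bool → ℝ) (hQ : BinBox Q) (u v : Bool) :
    |(∑ y, Q false y u v) - 1/2| ≤ 2 * (1 - (1/4) * ∑ u', ∑ v', ∑ x, ∑ y,
          (if xor x y = (u' && v') then Q x y u' v' else 0)) := by
  obtain ⟨hnn, hnorm, hA, hB⟩ := hQ
  have n1 := hnorm false false
  have n2 := hnorm false true
  have n3 := hnorm true false
  have n4 := hnorm true true
  have a1 := hA false false true false
  have a2 := hA false false true true
  have a3 := hA true false true false
  have a4 := hA true false true true
  have b1 := hB false false false true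
  have b2 := hB false true false true
  have b3 := hB true false false true
  have b4 := hB true true false true
  simp only [Fintype.sum_bool, Bool.xor_false, Bool.xor_true, Bool.and_false, Bool.and_true,
    Bool.false_and, Bool.true_and, if_true, if_false, Bool.true_eq_false, Bool.false_eq_true,
    if_pos rfl, Bool.not_true, Bool.not_false] at *
  norm_num at *
  rw [abs_le]
  cases u <;> cases v <;>
  · constructor <;>
    linarith

/-- for a binary bipartite box with average CHSH error `ε`, every box partition
gives Eve distance from uniform on Alice's output (given the inputs) at most `2ε`. -/
theorem distance_from_uniform_single_box_le
    (P : Bool → Bool → Bool → Bool → ℝ) (hP : BinBox P)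
    {Z : Type*} [Fintype Z]
    (p : Z → ℝ) (Pz : Z → Bool → Bool → Bool → Bool → ℝ)
    (hp : ∀ z, 0 ≤ p z) (hPz : ∀ z, BinBox (Pz z))
    (hpart : ∀ x y u v, ∑ z, p z * Pz z x y u v = P x y u v) :
    ∀ u v, ∑ z, p z * |(∑ y, Pz z false y u v) - 1/2|
      ≤ 2 * (1 - (1/4) * ∑ u', ∑ v', ∑ x, ∑ y,
          (if xor x y = (u' && v') then P x y u' v' else 0)) := by
  intro u v
  have hsum1 : ∑ z, p z = 1 := by
    calc ∑ z, p z = ∑ z, p z * (∑ x, ∑ y, Pz z x y false false) := by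
            refine Finset.sum_congr rfl fun z _ => ?_
            rw [(hPz z).2.1 false false, mul_one]
      _ = ∑ x, ∑ y, ∑ z, p z * Pz z x y false false := by
            simp only [Finset.mul_sum]
            rw [Finset.sum_comm]
            refine Finset.sum_congr rfl fun x _ => ?_
            rw [Finset.sum_comm]
      _ = 1 := by simp only [hpart]; exact hP.2.1 false false
  have hS : (∑ u', ∑ v', ∑ x, ∑ y, (if xor x y = (u' && v') then P x y u' v' else 0))
      = ∑ z, p z * (∑ u', ∑ v', ∑ x, ∑ y,
          (if xor x y = (u' && v') then Pz z x y u' v' else 0)) := by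
    simp only [Fintype.sum_bool, ← hpart]
    simp only [mul_add, Finset.sum_add_distrib, Finset.mul_sum]
    norm_num
  calc ∑ z, p z * |(∑ y, Pz z false y u v) - 1/2|
      ≤ ∑ z, p z * (2 * (1 - (1/4) * ∑ u', ∑ v', ∑ x, ∑ y,
          (if xor x y = (u' && v') then Pz z x y u' v' else 0))) := by
        refine Finset.sum_le_sum fun z _ => ?_
        exact mul_le_mul_of_nonneg_left (single_box_chsh (Pz z) (hPz z) u v) (hp z)
    _ = 2 * (1 - (1/4) * ∑ u', ∑ v', ∑ x, ∑ y,
          (if xor x y = (u' && v') then P x y u' v' else 0)) := by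
        rw [hS]
        have expand : ∀ (q s : ℝ), q * (2 * (1 - (1/4) * s)) = 2 * q - (1/2) * (q * s) := by
          intros; ring
        simp only [expand]
        rw [Finset.sum_sub_distrib, ← Finset.mul_sum, ← Finset.mul_sum, hsum1]
        ring
end

section
/- Let ε ∈ [0,1/4] and let P_ε be the unbiased box with error ε. Then there exists a box partition {(p^z, P^z)}_{z∈𝒵} of P_ε together with a subset L ⊆ 𝒵 such that: (i) ∑_{z∈L} p^z = 4ε; (ii) for every z ∈ L, P^z is local deterministic, i.e. for every u ∈ {0,1} there is x(u) ∈ {0,1} with ∑_y P^z(x(u),y|u,v) = 1 for both v, and for every v there is y(v) with ∑_x P^z(x,y(v)|u,v) = 1 for both u; (iii) for every z ∉ L, P^z is the Popescu–Rohrlich box, i.e. P^z(x,y|u,v) = 1/2 if x⊕y = u·v and 0 otherwise. Consequently, for every input (u,v) ∈ {0,1}²: ∑_{z∈𝒵} p^z · |∑_y P^z(0,y|u,v) − 1/2| = 2ε. -/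
/-- The unbiased box with error `ε`. -/
noncomputable def Peps (ε : ℝ) (x y u v : Bool) : ℝ :=
  if xor x y = (u && v) then (1 - ε) / 2 else ε / 2

/-- The PR box. -/
noncomputable def PRbox (x y u v : Bool) : ℝ :=
  if xor x y = (u && v) then 1/2 else 0

/-- Local deterministic box with strategies `f`, `g`. -/
noncomputable def detBox (f g : Bool → Bool) (x y u v : Bool) : ℝ :=
  if x = f u ∧ y = g v then 1 else 0

lemma detBox_rowsum (f g : Bool → Bool) (u v : Bool) :
    ∑ y, detBox f g (f u) y u v = 1 := by
  cases hgv : g v <;> simp [detBox, Fintype.sum_bool, hgv]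

lemma detBox_colsum (f g : Bool → Bool) (u v : Bool) :
    ∑ x, detBox f g x (g v) u v = 1 := by
  cases hfu : f u <;> simp [detBox, Fintype.sum_bool, hfu]

lemma localDet (f g : Bool → Bool) :
    (∀ u, ∃ x0, ∀ v, ∑ y, detBox f g x0 y u v = 1) ∧
    (∀ v, ∃ y0, ∀ u, ∑ x, detBox f g x y0 u v = 1) :=
  ⟨fun u => ⟨f u, fun v => detBox_rowsum f g u v⟩,
   fun v => ⟨g v, fun u => detBox_colsum f g u v⟩⟩

lemma detBox_binBox (f g : Bool → Bool) : BinBox (detBox f g) := by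
  refine ⟨fun x y u v => ?_, fun u v => ?_, fun y u u' v => ?_, fun x u v v' => ?_⟩
  · unfold detBox; split <;> norm_num
  · cases hfu : f u <;> cases hgv : g v <;>
      simp only [detBox, Fintype.sum_bool, hfu, hgv] <;> norm_num
  · cases y <;> cases hfu : f u <;> cases hfu' : f u' <;> cases hgv : g v <;>
      simp only [detBox, Fintype.sum_bool, hfu, hfu', hgv] <;> norm_num
  · cases x <;> cases hfu : f u <;> cases hgv : g v <;> cases hgv' : g v' <;>
      simp only [detBox, Fintype.sum_bool, hfu, hgv, hgv'] <;> norm_num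

lemma PR_binBox : BinBox PRbox := by
  refine ⟨fun x y u v => ?_, fun u v => ?_, fun y u u' v => ?_, fun x u v v' => ?_⟩
  · unfold PRbox; split <;> norm_num
  · cases u <;> cases v <;> simp [PRbox, Fintype.sum_bool] <;> norm_num
  · cases y <;> cases u <;> cases u' <;> cases v <;>
      simp [PRbox, Fintype.sum_bool] <;> norm_num
  · cases x <;> cases u <;> cases v <;> cases v' <;>
      simp [PRbox, Fintype.sum_bool] <;> norm_num

/-- for `ε ∈ [0,1/4]` there is a box partition of the unbiased box `P_ε`
consisting, with total weight `4ε`, of local deterministic boxes, and otherwise of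
Popescu–Rohrlich boxes; it attains distance from uniform exactly `2ε`. -/
theorem optimal_box_partition_single_box
    (ε : ℝ) (h0 : 0 ≤ ε) (h1 : ε ≤ 1/4) :
    ∃ (m : ℕ) (p : Fin m → ℝ) (Pz : Fin m → Bool → Bool → Bool → Bool → ℝ)
      (L : Finset (Fin m)),
      (∀ z, 0 ≤ p z) ∧ (∀ z, BinBox (Pz z)) ∧
      (∀ x y u v, ∑ z, p z * Pz z x y u v = Peps ε x y u v) ∧
      -- (i) total weight of the local part
      (∑ z ∈ L, p z = 4 * ε) ∧
      -- (ii) the boxes in L are local deterministic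
      (∀ z ∈ L,
        (∀ u, ∃ x0, ∀ v, ∑ y, Pz z x0 y u v = 1) ∧
        (∀ v, ∃ y0, ∀ u, ∑ x, Pz z x y0 u v = 1)) ∧
      -- (iii) the boxes outside L are PR boxes
      (∀ z ∉ L, ∀ x y u v,
        Pz z x y u v = if xor x y = (u && v) then 1/2 else 0) ∧
      -- consequently the distance from uniform is exactly 2ε
      (∀ u v, ∑ z, p z * |(∑ y, Pz z false y u v) - 1/2| = 2 * ε) := by
  refine ⟨9, fun z => if z = 0 then 1 - 4*ε else ε/2,
    ![PRbox,
      detBox (fun _ => false) (fun _ => false),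
      detBox (fun _ => true)  (fun _ => true),
      detBox (fun u => u)     (fun v => !v),
      detBox (fun u => !u)    (fun v => v),
      detBox (fun u => u)     (fun _ => false),
      detBox (fun u => !u)    (fun _ => true),
      detBox (fun _ => false) (fun v => v),
      detBox (fun _ => true)  (fun v => !v)],
    Finset.univ.erase 0, ?_, ?_, ?_, ?_, ?_, ?_, ?_⟩
  · intro z; dsimp only; split <;> [linarith; linarith]
  · intro z
    fin_cases z <;>
      first
        | exact PR_binBox
        | exact detBox_binBox _ _
  · intro x y u v
    cases x <;> cases y <;> cases u <;> cases v <;>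
      simp [Fin.sum_univ_succ, detBox, PRbox, Peps] <;> ring
  · rw [Finset.sum_erase_eq_sub (Finset.mem_univ (0 : Fin 9))]
    simp [Fin.sum_univ_succ]
    ring
  · intro z hz
    fin_cases z
    · simp at hz
    · exact localDet (fun _ => false) (fun _ => false)
    · exact localDet (fun _ => true)  (fun _ => true)
    · exact localDet (fun u => u)     (fun v => !v)
    · exact localDet (fun u => !u)    (fun v => v)
    · exact localDet (fun u => u)     (fun _ => false)
    · exact localDet (fun u => !u)    (fun _ => true)
    · exact localDet (fun _ => false) (fun v => v)
    · exact localDet (fun _ => true)  (fun v => !v)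
  · intro z hz x y u v
    have hz0 : z = 0 := by
      by_contra h
      exact hz (Finset.mem_erase.2 ⟨h, Finset.mem_univ z⟩)
    subst hz0
    simp [PRbox]
  · intro u v
    have ha : |(0:ℝ) - 1/2| = 1/2 := by rw [abs_of_nonpos] <;> norm_num
    have hb : |(1:ℝ) - 1/2| = 1/2 := by rw [abs_of_nonneg] <;> norm_num
    have hc : |(1:ℝ)/2| = 1/2 := by rw [abs_of_nonneg] <;> norm_num
    have hd : |(2:ℝ)⁻¹| = 2⁻¹ := by rw [abs_of_nonneg] <;> norm_num
    cases u <;> cases v <;>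
      simp only [Fin.sum_univ_succ, Fin.sum_univ_zero, Fintype.sum_bool,
        detBox, PRbox, Matrix.cons_val_zero, Matrix.cons_val_succ] <;>
      norm_num [Fin.ext_iff, Fin.val_succ] <;> ring
end

section
/- Let n ≥ 1 and ε_1,…,ε_n ∈ [0,1/4], and let P be the 2n-partite binary box given by the product P(x,y|u,v) = ∏_{i=1}^n P_{ε_i}(x_i,y_i|u_i,v_i), where P_ε(a,b|c,d) = (1−ε)/2 if a⊕b = c·d and ε/2 otherwise. Then for every box partition {(p^z, P^z)}_{z∈𝒵} of P in which every P^z is itself a 2n-partite binary box, and for every fixed input (u,v) ∈ ({0,1}^n)²: ∑_{z∈𝒵} p^z · |∑_{(x,y) : x_1⊕⋯⊕x_n = 0} P^z(x,y|u,v) − 1/2| ≤ (1/2)·∏_{i=1}^n (4ε_i). (That is, the XOR of the n output bits is a good privacy-amplification function against any non-signaling adversary.) -/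
/-- A `2n`-partite binary box: nonnegative, normalized, and non-signaling at every one of
the `2n` interfaces. -/
def NSBox (n : ℕ)
    (P : (Fin n → Bool) → (Fin n → Bool) → (Fin n → Bool) → (Fin n → Bool) → ℝ) : Prop :=
  (∀ x y u v, 0 ≤ P x y u v) ∧
  (∀ u v, ∑ x, ∑ y, P x y u v = 1) ∧
  (∀ x y u v (i : Fin n) (b : Bool),
    ∑ c : Bool, P (Function.update x i c) y u v
      = ∑ c : Bool, P (Function.update x i c) y (Function.update u i b) v) ∧
  (∀ x y u v (i : Fin n) (b : Bool),
    ∑ c : Bool, P x (Function.update y i c) u v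
      = ∑ c : Bool, P x (Function.update y i c) u (Function.update v i b))

namespace PAux

abbrev Box (n : ℕ) :=
  (Fin n → Bool) → (Fin n → Bool) → (Fin n → Bool) → (Fin n → Bool) → ℝ

noncomputable def sA (a : Bool) : ℝ := if a then -1 else 1

noncomputable def sgn {n : ℕ} (x : Fin n → Bool) : ℝ := ∏ i, sA (x i)

lemma sgn_cons {n : ℕ} (a : Bool) (x : Fin n → Bool) :
    sgn (Fin.cons a x) = sA a * sgn x := by
  simp [sgn, Fin.prod_univ_succ]

lemma sum_cons {n : ℕ} {α : Type*} [Fintype α] (f : (Fin (n+1) → α) → ℝ) :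
    ∑ x, f x = ∑ a : α, ∑ x' : Fin n → α, f (Fin.cons a x') := by
  calc ∑ x, f x = ∑ p : α × (Fin n → α), f (Fin.cons p.1 p.2) :=
        (Fintype.sum_equiv (Fin.consEquiv fun _ => α) _ f fun p => rfl).symm
    _ = ∑ a : α, ∑ x' : Fin n → α, f (Fin.cons a x') := Fintype.sum_prod_type _

def Bad1 (q : Bool × Bool × Bool × Bool) : Prop :=
  xor q.1 q.2.1 ≠ (q.2.2.1 && q.2.2.2)

instance : DecidablePred Bad1 := fun _ => by unfold Bad1; infer_instance

noncomputable def badBox (n : ℕ) (P : Box n) : ℝ :=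
  ∑ w : Fin n → Bool × Bool × Bool × Bool, if ∀ i, Bad1 (w i)
    then P (fun i => (w i).1) (fun i => (w i).2.1) (fun i => (w i).2.2.1)
      (fun i => (w i).2.2.2) else 0

def slice {n : ℕ} (P : Box (n+1)) (a b c d : Bool) : Box n :=
  fun x y u v => P (Fin.cons a x) (Fin.cons b y) (Fin.cons c u) (Fin.cons d v)

lemma cons_proj {n : ℕ} {α β : Type*} (f : α → β) (q : α) (w : Fin n → α) :
    (fun i => f ((Fin.cons q w : Fin (n+1) → α) i)) = Fin.cons (f q) (fun i => f (w i)) := by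
  funext i
  induction i using Fin.cases <;> simp

end PAux

namespace PAux

lemma slice_nonneg {n : ℕ} {P : Box (n+1)} (h0 : ∀ x y u v, 0 ≤ P x y u v)
    (a b c d : Bool) : ∀ x y u v, 0 ≤ slice P a b c d x y u v :=
  fun x y u v => h0 _ _ _ _

lemma slice_nsx {n : ℕ} {P : Box (n+1)}
    (hx : ∀ x y u v (i : Fin (n+1)) (b : Bool),
      ∑ c : Bool, P (Function.update x i c) y u v
        = ∑ c : Bool, P (Function.update x i c) y (Function.update u i b) v)
    (a b c d : Bool) :
    ∀ x y u v (i : Fin n) (bb : Bool),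
      ∑ cc : Bool, slice P a b c d (Function.update x i cc) y u v
        = ∑ cc : Bool, slice P a b c d (Function.update x i cc) y (Function.update u i bb) v := by
  intro x y u v i bb
  unfold slice
  simp only [Fin.cons_update]
  exact hx (Fin.cons a x) (Fin.cons b y) (Fin.cons c u) (Fin.cons d v) i.succ bb

lemma slice_nsy {n : ℕ} {P : Box (n+1)}
    (hy : ∀ x y u v (i : Fin (n+1)) (b : Bool),
      ∑ c : Bool, P x (Function.update y i c) u v
        = ∑ c : Bool, P x (Function.update y i c) u (Function.update v i b))
    (a b c d : Bool) :
    ∀ x y u v (i : Fin n) (bb : Bool),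
      ∑ cc : Bool, slice P a b c d x (Function.update y i cc) u v
        = ∑ cc : Bool, slice P a b c d x (Function.update y i cc) u (Function.update v i bb) := by
  intro x y u v i bb
  unfold slice
  simp only [Fin.cons_update]
  exact hy (Fin.cons a x) (Fin.cons b y) (Fin.cons c u) (Fin.cons d v) i.succ bb

noncomputable def K {n : ℕ} (P : Box (n+1)) (a b c d : Bool) (u' v' : Fin n → Bool) : ℝ :=
  ∑ x', ∑ y', sgn x' * slice P a b c d x' y' u' v'

/-- summing over Bob's 0-th output kills dependence on Bob's 0-th input -/
lemma sumb_eq {n : ℕ} {P : Box (n+1)}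
    (hy : ∀ x y u v (i : Fin (n+1)) (b : Bool),
      ∑ c : Bool, P x (Function.update y i c) u v
        = ∑ c : Bool, P x (Function.update y i c) u (Function.update v i b))
    (x : Fin (n+1) → Bool) (y' : Fin n → Bool) (u : Fin (n+1) → Bool)
    (d d' : Bool) (v' : Fin n → Bool) :
    ∑ b : Bool, P x (Fin.cons b y') u (Fin.cons d v')
      = ∑ b : Bool, P x (Fin.cons b y') u (Fin.cons d' v') := by
  have h := hy x (Fin.cons false y') u (Fin.cons d v') 0 d'
  simpa [Fin.update_cons_zero] using h

lemma suma_eq {n : ℕ} {P : Box (n+1)}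
    (hx : ∀ x y u v (i : Fin (n+1)) (b : Bool),
      ∑ c : Bool, P (Function.update x i c) y u v
        = ∑ c : Bool, P (Function.update x i c) y (Function.update u i b) v)
    (x' : Fin n → Bool) (y : Fin (n+1) → Bool) (c c' : Bool) (u' : Fin n → Bool)
    (v : Fin (n+1) → Bool) :
    ∑ a : Bool, P (Fin.cons a x') y (Fin.cons c u') v
      = ∑ a : Bool, P (Fin.cons a x') y (Fin.cons c' u') v := by
  have h := hx (Fin.cons false x') y (Fin.cons c u') v 0 c'
  simpa [Fin.update_cons_zero] using h

/-- NS fact (i): `∑ b, K a b c d` does not depend on `d`. -/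
lemma K_sumb {n : ℕ} {P : Box (n+1)}
    (hy : ∀ x y u v (i : Fin (n+1)) (b : Bool),
      ∑ c : Bool, P x (Function.update y i c) u v
        = ∑ c : Bool, P x (Function.update y i c) u (Function.update v i b))
    (a c d d' : Bool) (u' v' : Fin n → Bool) :
    ∑ b : Bool, K P a b c d u' v' = ∑ b : Bool, K P a b c d' u' v' := by
  unfold K slice
  rw [Finset.sum_comm]
  rw [show (∑ b : Bool, ∑ x', ∑ y', sgn x' *
      P (Fin.cons a x') (Fin.cons b y') (Fin.cons c u') (Fin.cons d' v'))
    = ∑ x', ∑ b : Bool, ∑ y', sgn x' *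
      P (Fin.cons a x') (Fin.cons b y') (Fin.cons c u') (Fin.cons d' v') from Finset.sum_comm]
  refine Finset.sum_congr rfl fun x' _ => ?_
  rw [Finset.sum_comm, Finset.sum_comm (s := (Finset.univ : Finset Bool))]
  refine Finset.sum_congr rfl fun y' _ => ?_
  rw [← Finset.mul_sum, ← Finset.mul_sum, sumb_eq hy]

/-- NS fact (ii): `∑ a, K a b c d` does not depend on `c`. -/
lemma K_suma {n : ℕ} {P : Box (n+1)}
    (hx : ∀ x y u v (i : Fin (n+1)) (b : Bool),
      ∑ c : Bool, P (Function.update x i c) y u v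
        = ∑ c : Bool, P (Function.update x i c) y (Function.update u i b) v)
    (b c c' d : Bool) (u' v' : Fin n → Bool) :
    ∑ a : Bool, K P a b c d u' v' = ∑ a : Bool, K P a b c' d u' v' := by
  unfold K slice
  rw [Finset.sum_comm]
  rw [show (∑ a : Bool, ∑ x', ∑ y', sgn x' *
      P (Fin.cons a x') (Fin.cons b y') (Fin.cons c' u') (Fin.cons d v'))
    = ∑ x', ∑ a : Bool, ∑ y', sgn x' *
      P (Fin.cons a x') (Fin.cons b y') (Fin.cons c' u') (Fin.cons d v') from Finset.sum_comm]
  refine Finset.sum_congr rfl fun x' _ => ?_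
  rw [Finset.sum_comm, Finset.sum_comm (s := (Finset.univ : Finset Bool))]
  refine Finset.sum_congr rfl fun y' _ => ?_
  rw [← Finset.mul_sum, ← Finset.mul_sum, suma_eq hx]

end PAux

namespace PAux

lemma main_to_K {n : ℕ} (P : Box (n+1)) (c d : Bool) (u' v' : Fin n → Bool) :
    ∑ x, ∑ y, sgn x * P x y (Fin.cons c u') (Fin.cons d v')
      = ∑ a : Bool, ∑ b : Bool, sA a * K P a b c d u' v' := by
  calc ∑ x, ∑ y, sgn x * P x y (Fin.cons c u') (Fin.cons d v')
      = ∑ a : Bool, ∑ x', ∑ y, sgn (Fin.cons a x') *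
          P (Fin.cons a x') y (Fin.cons c u') (Fin.cons d v') := sum_cons _
    _ = ∑ a : Bool, ∑ x', ∑ b : Bool, ∑ y', sgn (Fin.cons a x') *
          P (Fin.cons a x') (Fin.cons b y') (Fin.cons c u') (Fin.cons d v') := by
        exact Finset.sum_congr rfl fun a _ => Finset.sum_congr rfl fun x' _ => sum_cons _
    _ = ∑ a : Bool, ∑ b : Bool, ∑ x', ∑ y', sgn (Fin.cons a x') *
          P (Fin.cons a x') (Fin.cons b y') (Fin.cons c u') (Fin.cons d v') := by
        exact Finset.sum_congr rfl fun a _ => Finset.sum_comm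
    _ = ∑ a : Bool, ∑ b : Bool, sA a * K P a b c d u' v' := by
        refine Finset.sum_congr rfl fun a _ => Finset.sum_congr rfl fun b _ => ?_
        unfold K slice
        rw [Finset.mul_sum]
        refine Finset.sum_congr rfl fun x' _ => ?_
        rw [Finset.mul_sum]
        refine Finset.sum_congr rfl fun y' _ => ?_
        rw [sgn_cons]; ring

lemma badBox_succ {n : ℕ} (P : Box (n+1)) :
    badBox (n+1) P = ∑ a : Bool, ∑ b : Bool, ∑ c : Bool, ∑ d : Bool,
      if xor a b ≠ (c && d) then badBox n (slice P a b c d) else 0 := by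
  unfold badBox
  rw [sum_cons]
  simp only [Fintype.sum_prod_type]
  refine Finset.sum_congr rfl fun a _ => Finset.sum_congr rfl fun b _ =>
    Finset.sum_congr rfl fun c _ => Finset.sum_congr rfl fun d _ => ?_
  have hcond : ∀ w' : Fin n → Bool × Bool × Bool × Bool,
      (∀ i : Fin (n+1), Bad1 ((Fin.cons (a,b,c,d) w' : Fin (n+1) → Bool × Bool × Bool × Bool) i))
        ↔ ((xor a b ≠ (c && d)) ∧ ∀ i : Fin n, Bad1 (w' i)) := by
    intro w'
    rw [Fin.forall_fin_succ]
    simp [Bad1]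
  calc (∑ w' : Fin n → Bool × Bool × Bool × Bool,
        if (∀ i : Fin (n+1), Bad1 ((Fin.cons (a,b,c,d) w' : Fin (n+1) → Bool × Bool × Bool × Bool) i)) then
          P (fun i => ((Fin.cons (a,b,c,d) w' : Fin (n+1) → Bool × Bool × Bool × Bool) i).1) (fun i => ((Fin.cons (a,b,c,d) w' : Fin (n+1) → Bool × Bool × Bool × Bool) i).2.1)
            (fun i => ((Fin.cons (a,b,c,d) w' : Fin (n+1) → Bool × Bool × Bool × Bool) i).2.2.1) (fun i => ((Fin.cons (a,b,c,d) w' : Fin (n+1) → Bool × Bool × Bool × Bool) i).2.2.2)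
          else 0)
      = ∑ w' : Fin n → Bool × Bool × Bool × Bool,
        if ((xor a b ≠ (c && d)) ∧ ∀ i : Fin n, Bad1 (w' i)) then
          slice P a b c d (fun i => (w' i).1) (fun i => (w' i).2.1)
            (fun i => (w' i).2.2.1) (fun i => (w' i).2.2.2) else 0 := by
        refine Finset.sum_congr rfl fun w' _ => ?_
        rw [cons_proj (fun q : Bool × Bool × Bool × Bool => q.1),
          cons_proj (fun q : Bool × Bool × Bool × Bool => q.2.1),
          cons_proj (fun q : Bool × Bool × Bool × Bool => q.2.2.1),
          cons_proj (fun q : Bool × Bool × Bool × Bool => q.2.2.2)]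
        exact if_congr (hcond w') rfl rfl
    _ = if xor a b ≠ (c && d) then badBox n (slice P a b c d) else 0 := by
        by_cases h : xor a b ≠ (c && d)
        · rw [if_pos h]
          exact Finset.sum_congr rfl fun w' _ => if_congr (and_iff_right h) rfl rfl
        · rw [if_neg h]
          refine Finset.sum_eq_zero fun w' _ => ?_
          rw [if_neg (by tauto)]

end PAux

namespace PAux

theorem key (n : ℕ) : ∀ (P : Box n),
    (∀ x y u v, 0 ≤ P x y u v) →
    (∀ x y u v (i : Fin n) (b : Bool),
      ∑ c : Bool, P (Function.update x i c) y u v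
        = ∑ c : Bool, P (Function.update x i c) y (Function.update u i b) v) →
    (∀ x y u v (i : Fin n) (b : Bool),
      ∑ c : Bool, P x (Function.update y i c) u v
        = ∑ c : Bool, P x (Function.update y i c) u (Function.update v i b)) →
    ∀ u v, |∑ x, ∑ y, sgn x * P x y u v| ≤ badBox n P := by
  induction n with
  | zero =>
      intro P h0 _ _ u v
      rw [Unique.eq_default u, Unique.eq_default v]
      rw [Fintype.sum_unique, Fintype.sum_unique]
      unfold badBox
      rw [Fintype.sum_unique]
      rw [if_pos (fun i : Fin 0 => i.elim0)]
      simp only [sgn, Finset.univ_eq_empty, Finset.prod_empty, one_mul]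
      rw [abs_of_nonneg (h0 _ _ _ _)]
      exact le_of_eq (by congr 1 <;> exact funext fun i => i.elim0)
  | succ n IH =>
      intro P h0 hx hy u v
      rw [show u = Fin.cons (u 0) (Fin.tail u) from (Fin.cons_self_tail u).symm,
        show v = Fin.cons (v 0) (Fin.tail v) from (Fin.cons_self_tail v).symm,
        main_to_K, badBox_succ]
      set u' := Fin.tail u with hu'
      set v' := Fin.tail v with hv'
      have hK : ∀ a b cc dd, |K P a b cc dd u' v'| ≤ badBox n (slice P a b cc dd) := by
        intro a b cc dd
        exact IH (slice P a b cc dd) (slice_nonneg h0 _ _ _ _)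
          (slice_nsx hx _ _ _ _) (slice_nsy hy _ _ _ _) u' v'
      have hKu : ∀ a b cc dd, K P a b cc dd u' v' ≤ badBox n (slice P a b cc dd) :=
        fun a b cc dd => (abs_le.mp (hK a b cc dd)).2
      have hKl : ∀ a b cc dd, -(badBox n (slice P a b cc dd)) ≤ K P a b cc dd u' v' :=
        fun a b cc dd => (abs_le.mp (hK a b cc dd)).1
      have hi : ∀ a cc, K P a true cc true u' v' + K P a false cc true u' v'
            = K P a true cc false u' v' + K P a false cc false u' v' := by
        intro a cc
        have h := K_sumb hy a cc true false u' v'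
        simpa [Fintype.sum_bool] using h
      have hii : ∀ b dd, K P true b true dd u' v' + K P false b true dd u' v'
            = K P true b false dd u' v' + K P false b false dd u' v' := by
        intro b dd
        have h := K_suma hx b true false dd u' v'
        simpa [Fintype.sum_bool] using h
      cases hc : u 0 <;> cases hd : v 0 <;>
      · simp only [Fintype.sum_bool, sA, if_true, if_false, Bool.xor_true, Bool.xor_false,
          Bool.true_and, Bool.false_and, Bool.and_true, Bool.and_false, Bool.not_true,
          Bool.not_false, ne_eq, decide_eq_true_eq, ite_true, ite_false]
        norm_num
        rw [abs_le]
        constructor <;>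
          linarith [hi false false, hi false true, hi true false, hi true true,
            hii false false, hii false true, hii true false, hii true true,
            hKu false false false false, hKu false false false true, hKu false false true false,
            hKu false false true true, hKu false true false false, hKu false true false true,
            hKu false true true false, hKu false true true true, hKu true false false false,
            hKu true false false true, hKu true false true false, hKu true false true true,
            hKu true true false false, hKu true true false true, hKu true true true false,
            hKu true true true true,
            hKl false false false false, hKl false false false true, hKl false false true false,
            hKl false false true true, hKl false true false false, hKl false true false true,
            hKl false true true false, hKl false true true true, hKl true false false false,
            hKl true false false true, hKl true false true false, hKl true false true true,
            hKl true true false false, hKl true true false true, hKl true true true false,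
            hKl true true true true]

end PAux

namespace PAux

lemma sgn_eq_ite {n : ℕ} (x : Fin n → Bool) :
    sgn x = if (Finset.univ.filter fun i => x i = true).card % 2 = 0 then (1:ℝ) else -1 := by
  have h : sgn x = (-1 : ℝ) ^ (Finset.univ.filter fun i => x i = true).card := by
    unfold sgn sA
    rw [Finset.prod_ite, Finset.prod_const, Finset.prod_const, one_pow, mul_one]
  rw [h]
  rcases Nat.even_or_odd ((Finset.univ.filter fun i => x i = true).card) with he | ho
  · rw [he.neg_one_pow, if_pos (Nat.even_iff.mp he)]
  · rw [ho.neg_one_pow, if_neg (by rw [Nat.odd_iff] at ho; omega)]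

lemma ite_forall_prod {ι : Type*} [Fintype ι] (p : ι → Prop) [DecidablePred p] (f : ι → ℝ) :
    (if (∀ i, p i) then ∏ i, f i else 0) = ∏ i, if p i then f i else 0 := by
  by_cases h : ∀ i, p i
  · rw [if_pos h]
    exact Finset.prod_congr rfl fun i _ => (if_pos (h i)).symm
  · rw [if_neg h]
    push_neg at h
    obtain ⟨i, hi⟩ := h
    exact (Finset.prod_eq_zero (Finset.mem_univ i) (if_neg hi : (if p i then f i else 0) = 0)).symm

end PAux

/-- for a product of `n` unbiased boxes with errors `ε_i ∈ [0,1/4]`, any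
non-signaling adversary's distance from uniform on the XOR of Alice's `n` output bits is
at most `(1/2)·∏ (4ε_i)`. -/
theorem xor_is_good_privacy_amplification
    (n : ℕ) (hn : 1 ≤ n) (ε : Fin n → ℝ)
    (hε0 : ∀ i, 0 ≤ ε i) (hε1 : ∀ i, ε i ≤ 1/4)
    {Z : Type*} [Fintype Z]
    (p : Z → ℝ)
    (Pz : Z → (Fin n → Bool) → (Fin n → Bool) → (Fin n → Bool) → (Fin n → Bool) → ℝ)
    (hp : ∀ z, 0 ≤ p z) (hPz : ∀ z, NSBox n (Pz z))
    (hpart : ∀ x y u v, ∑ z, p z * Pz z x y u v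
        = ∏ i, Peps (ε i) (x i) (y i) (u i) (v i)) :
    ∀ u v, ∑ z, p z *
        |(∑ x, ∑ y, if (Finset.univ.filter fun i => x i = true).card % 2 = 0
            then Pz z x y u v else 0) - 1/2|
      ≤ (1/2) * ∏ i, (4 * ε i) := by
  intro u v
  classical
  have hz : ∀ z, (∑ x, ∑ y, if (Finset.univ.filter fun i => x i = true).card % 2 = 0
        then Pz z x y u v else 0) - 1/2
      = (1/2) * ∑ x, ∑ y, PAux.sgn x * Pz z x y u v := by
    intro z
    have hnorm := (hPz z).2.1 u v
    have hpt : ∀ (x : Fin n → Bool) (r : ℝ),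
        (if (Finset.univ.filter fun i => x i = true).card % 2 = 0 then r else 0)
          = (1/2) * r + (1/2) * (PAux.sgn x * r) := by
      intro x r
      rw [PAux.sgn_eq_ite]
      by_cases h : (Finset.univ.filter fun i => x i = true).card % 2 = 0 <;> simp [h] <;> ring
    have hsplit : (∑ x, ∑ y, if (Finset.univ.filter fun i => x i = true).card % 2 = 0
          then Pz z x y u v else 0)
        = (1/2) * (∑ x, ∑ y, Pz z x y u v)
          + (1/2) * (∑ x, ∑ y, PAux.sgn x * Pz z x y u v) := by
      rw [Finset.mul_sum, Finset.mul_sum, ← Finset.sum_add_distrib]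
      refine Finset.sum_congr rfl fun x _ => ?_
      rw [Finset.mul_sum, Finset.mul_sum, ← Finset.sum_add_distrib]
      exact Finset.sum_congr rfl fun y _ => hpt x _
    rw [hsplit, hnorm]; ring
  have hb : ∀ z, p z * |(∑ x, ∑ y, if (Finset.univ.filter fun i => x i = true).card % 2 = 0
        then Pz z x y u v else 0) - 1/2|
      ≤ p z * ((1/2) * PAux.badBox n (Pz z)) := by
    intro z
    refine mul_le_mul_of_nonneg_left ?_ (hp z)
    rw [hz z, abs_mul, abs_of_nonneg (by norm_num : (0:ℝ) ≤ 1/2)]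
    have hkey := PAux.key n (Pz z) (hPz z).1 (hPz z).2.2.1 (hPz z).2.2.2 u v
    linarith
  have hmix : (∑ z, p z * PAux.badBox n (Pz z)) = ∏ i, (4 * ε i) := by
    have h1 : ∀ z, p z * PAux.badBox n (Pz z)
        = ∑ w : Fin n → Bool × Bool × Bool × Bool, if (∀ i, PAux.Bad1 (w i))
            then p z * Pz z (fun i => (w i).1) (fun i => (w i).2.1)
              (fun i => (w i).2.2.1) (fun i => (w i).2.2.2) else 0 := by
      intro z
      unfold PAux.badBox
      rw [Finset.mul_sum]
      exact Finset.sum_congr rfl fun w _ => by rw [mul_ite, mul_zero]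
    calc (∑ z, p z * PAux.badBox n (Pz z))
        = ∑ w : Fin n → Bool × Bool × Bool × Bool, ∑ z, if (∀ i, PAux.Bad1 (w i))
            then p z * Pz z (fun i => (w i).1) (fun i => (w i).2.1)
              (fun i => (w i).2.2.1) (fun i => (w i).2.2.2) else 0 := by
          rw [show (∑ z, p z * PAux.badBox n (Pz z)) = ∑ z, ∑ w : Fin n → Bool × Bool × Bool × Bool,
              if (∀ i, PAux.Bad1 (w i))
              then p z * Pz z (fun i => (w i).1) (fun i => (w i).2.1)
                (fun i => (w i).2.2.1) (fun i => (w i).2.2.2) else 0 from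
            Finset.sum_congr rfl fun z _ => h1 z]
          exact Finset.sum_comm
      _ = ∑ w : Fin n → Bool × Bool × Bool × Bool, if (∀ i, PAux.Bad1 (w i))
            then ∏ i, Peps (ε i) ((w i).1) ((w i).2.1) ((w i).2.2.1) ((w i).2.2.2) else 0 := by
          refine Finset.sum_congr rfl fun w _ => ?_
          by_cases h : ∀ i, PAux.Bad1 (w i)
          · rw [if_pos h]
            rw [Finset.sum_ite_of_true (fun z _ => h), hpart]
          · rw [if_neg h, Finset.sum_ite_of_false (fun z _ => h), Finset.sum_const_zero]
      _ = ∑ w : Fin n → Bool × Bool × Bool × Bool,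
            ∏ i, if PAux.Bad1 (w i)
              then Peps (ε i) ((w i).1) ((w i).2.1) ((w i).2.2.1) ((w i).2.2.2) else 0 := by
          refine Finset.sum_congr rfl fun w _ => ?_
          rw [← PAux.ite_forall_prod (fun i => PAux.Bad1 (w i))
            (fun i => Peps (ε i) ((w i).1) ((w i).2.1) ((w i).2.2.1) ((w i).2.2.2))]
          congr!
      _ = ∏ i, ∑ q : Bool × Bool × Bool × Bool,
            if PAux.Bad1 q then Peps (ε i) q.1 q.2.1 q.2.2.1 q.2.2.2 else 0 := by
          rw [Finset.prod_univ_sum]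
          rw [Fintype.piFinset_univ]
      _ = ∏ i, (4 * ε i) := by
          refine Finset.prod_congr rfl fun i _ => ?_
          simp [Fintype.sum_prod_type, Fintype.sum_bool, PAux.Bad1, Peps]
          ring
  calc ∑ z, p z * |(∑ x, ∑ y, if (Finset.univ.filter fun i => x i = true).card % 2 = 0
          then Pz z x y u v else 0) - 1/2|
      ≤ ∑ z, p z * ((1/2) * PAux.badBox n (Pz z)) := Finset.sum_le_sum fun z _ => hb z
    _ = (1/2) * ∑ z, p z * PAux.badBox n (Pz z) := by
        rw [Finset.mul_sum]
        exact Finset.sum_congr rfl fun z _ => by ring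
    _ = (1/2) * ∏ i, (4 * ε i) := by rw [hmix]
end

section
/- Let P be a 2n-partite binary box, {(p^z, P^z)}_{z∈𝒵} a box partition of P in which every P^z is a 2n-partite binary box, and (u,v) ∈ ({0,1}^n)² a fixed input. Then there exists a box partition of P with exactly two elements {(q^0, Q^0), (q^1, Q^1)}, both Q^0 and Q^1 being 2n-partite binary boxes, such that ∑_{b∈{0,1}} q^b · |∑_{(x,y) : x_1⊕⋯⊕x_n = 0} Q^b(x,y|u,v) − 1/2| = ∑_{z∈𝒵} p^z · |∑_{(x,y) : x_1⊕⋯⊕x_n = 0} P^z(x,y|u,v) − 1/2|. -/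
/-- Auxiliary: the XOR-weight functional at fixed inputs. -/
def Tsum (n : ℕ) (u v : Fin n → Bool)
    (R : (Fin n → Bool) → (Fin n → Bool) → (Fin n → Bool) → (Fin n → Bool) → ℝ) : ℝ :=
  ∑ x, ∑ y, if (Finset.univ.filter fun i => x i = true).card % 2 = 0 then R x y u v else 0

/-- any box partition can be replaced by a two-element box partition achieving
the same distance from uniform of the XOR of Alice's output bits, for a fixed input. -/
theorem two_element_partition_suffices
    (n : ℕ)
    (P : (Fin n → Bool) → (Fin n → Bool) → (Fin n → Bool) → (Fin n → Bool) → ℝ)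
    (hP : NSBox n P)
    {Z : Type*} [Fintype Z]
    (p : Z → ℝ)
    (Pz : Z → (Fin n → Bool) → (Fin n → Bool) → (Fin n → Bool) → (Fin n → Bool) → ℝ)
    (hp : ∀ z, 0 ≤ p z) (hPz : ∀ z, NSBox n (Pz z))
    (hpart : ∀ x y u v, ∑ z, p z * Pz z x y u v = P x y u v)
    (u v : Fin n → Bool) :
    ∃ (q : Bool → ℝ)
      (Q : Bool → (Fin n → Bool) → (Fin n → Bool) → (Fin n → Bool) → (Fin n → Bool) → ℝ),
      (∀ b, 0 ≤ q b) ∧ (∀ b, NSBox n (Q b)) ∧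
      (∀ x y u' v', ∑ b, q b * Q b x y u' v' = P x y u' v') ∧
      (∑ b, q b *
          |(∑ x, ∑ y, if (Finset.univ.filter fun i => x i = true).card % 2 = 0
              then Q b x y u v else 0) - 1/2|
        = ∑ z, p z *
          |(∑ x, ∑ y, if (Finset.univ.filter fun i => x i = true).card % 2 = 0
              then Pz z x y u v else 0) - 1/2|) := by
  classical
  obtain ⟨hP0, hP1, hPA, hPB⟩ := hP
  set A : Finset Z := Finset.univ.filter (fun z => 1/2 ≤ Tsum n u v (Pz z)) with hAdef
  set sB : Bool → Finset Z := fun b => if b then A else Aᶜ with hsdef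
  set q : Bool → ℝ := fun b => ∑ z ∈ sB b, p z with hqdef
  have hq0 : ∀ b, 0 ≤ q b := fun b => Finset.sum_nonneg fun z _ => hp z
  have hpz0 : ∀ b, q b = 0 → ∀ z ∈ sB b, p z = 0 := fun b hb z hz =>
    (Finset.sum_eq_zero_iff_of_nonneg (fun z _ => hp z)).1 hb z hz
  set Q : Bool → (Fin n → Bool) → (Fin n → Bool) → (Fin n → Bool) → (Fin n → Bool) → ℝ :=
    fun b => if q b = 0 then P
      else fun x y u' v' => (q b)⁻¹ * ∑ z ∈ sB b, p z * Pz z x y u' v' with hQdef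
  -- generic sum swap
  have swap : ∀ (b : Bool) (g : Z → (Fin n → Bool) → (Fin n → Bool) → ℝ),
      (∑ x : Fin n → Bool, ∑ y : Fin n → Bool, ∑ z ∈ sB b, g z x y)
        = ∑ z ∈ sB b, ∑ x : Fin n → Bool, ∑ y : Fin n → Bool, g z x y := by
    intro b g
    have h1 : ∀ x : Fin n → Bool,
        (∑ y : Fin n → Bool, ∑ z ∈ sB b, g z x y) = ∑ z ∈ sB b, ∑ y, g z x y :=
      fun x => Finset.sum_comm
    simp_rw [h1]
    exact Finset.sum_comm
  have hmul : ∀ b x y u' v', q b * Q b x y u' v' = ∑ z ∈ sB b, p z * Pz z x y u' v' := by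
    intro b x y u' v'
    by_cases hb : q b = 0
    · rw [hb, zero_mul]
      exact (Finset.sum_eq_zero fun z hz => by rw [hpz0 b hb z hz, zero_mul]).symm
    · simp only [hQdef, hb, if_false]
      rw [← mul_assoc, mul_inv_cancel₀ hb, one_mul]
  have hQbox : ∀ b, NSBox n (Q b) := by
    intro b
    by_cases hb : q b = 0
    · simp only [hQdef, hb, if_true]
      exact ⟨hP0, hP1, hPA, hPB⟩
    · have hQb : Q b = fun x y u' v' => (q b)⁻¹ * ∑ z ∈ sB b, p z * Pz z x y u' v' := by
        simp only [hQdef, hb, if_false]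
      rw [hQb]
      refine ⟨?_, ?_, ?_, ?_⟩
      · intro x y u' v'
        exact mul_nonneg (inv_nonneg.2 (hq0 b))
          (Finset.sum_nonneg fun z _ => mul_nonneg (hp z) ((hPz z).1 x y u' v'))
      · intro u' v'
        calc (∑ x, ∑ y, (q b)⁻¹ * ∑ z ∈ sB b, p z * Pz z x y u' v')
            = (q b)⁻¹ * ∑ x, ∑ y, ∑ z ∈ sB b, p z * Pz z x y u' v' := by
              simp_rw [← Finset.mul_sum]
          _ = (q b)⁻¹ * ∑ z ∈ sB b, ∑ x, ∑ y, p z * Pz z x y u' v' := by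
              rw [swap]
          _ = (q b)⁻¹ * ∑ z ∈ sB b, p z := by
              congr 1
              refine Finset.sum_congr rfl fun z _ => ?_
              simp_rw [← Finset.mul_sum]
              rw [(hPz z).2.1, mul_one]
          _ = 1 := inv_mul_cancel₀ hb
      · intro x y u' v' i b'
        have lhs : ∀ (w : Fin n → Bool),
            (∑ c : Bool, (q b)⁻¹ * ∑ z ∈ sB b, p z * Pz z (Function.update x i c) y w v')
            = (q b)⁻¹ * ∑ z ∈ sB b, p z *
                ∑ c : Bool, Pz z (Function.update x i c) y w v' := by
          intro w
          rw [← Finset.mul_sum, Finset.sum_comm]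
          congr 1
          exact Finset.sum_congr rfl fun z _ => (Finset.mul_sum _ _ _).symm
        rw [lhs u', lhs (Function.update u' i b')]
        congr 1
        exact Finset.sum_congr rfl fun z _ => by rw [(hPz z).2.2.1 x y u' v' i b']
      · intro x y u' v' i b'
        have lhs : ∀ (w : Fin n → Bool),
            (∑ c : Bool, (q b)⁻¹ * ∑ z ∈ sB b, p z * Pz z x (Function.update y i c) u' w)
            = (q b)⁻¹ * ∑ z ∈ sB b, p z *
                ∑ c : Bool, Pz z x (Function.update y i c) u' w := by
          intro w
          rw [← Finset.mul_sum, Finset.sum_comm]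
          congr 1
          exact Finset.sum_congr rfl fun z _ => (Finset.mul_sum _ _ _).symm
        rw [lhs v', lhs (Function.update v' i b')]
        congr 1
        exact Finset.sum_congr rfl fun z _ => by rw [(hPz z).2.2.2 x y u' v' i b']
  have hpartQ : ∀ x y u' v', ∑ b, q b * Q b x y u' v' = P x y u' v' := by
    intro x y u' v'
    rw [Fintype.sum_bool, hmul, hmul]
    have hst : sB true = A := by simp [hsdef]
    have hsf : sB false = Aᶜ := by simp [hsdef]
    rw [hst, hsf, Finset.sum_add_sum_compl]
    exact hpart x y u' v'
  refine ⟨q, Q, hq0, hQbox, hpartQ, ?_⟩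
  -- key per-summand identity
  have habs : ∀ z ∈ A, |Tsum n u v (Pz z) - 1/2| = Tsum n u v (Pz z) - 1/2 := by
    intro z hz
    rw [hAdef] at hz
    have : 1/2 ≤ Tsum n u v (Pz z) := (Finset.mem_filter.1 hz).2
    exact abs_of_nonneg (by linarith)
  have habs' : ∀ z ∈ Aᶜ, |Tsum n u v (Pz z) - 1/2| = -(Tsum n u v (Pz z) - 1/2) := by
    intro z hz
    have h1 : ¬ (1/2 ≤ Tsum n u v (Pz z)) := by
      have := Finset.mem_compl.1 hz
      simpa [hAdef, Finset.mem_filter] using this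
    exact abs_of_neg (by linarith [lt_of_not_ge h1])
  have hble : ∀ z ∈ sB false, Tsum n u v (Pz z) - 1/2 ≤ 0 := by
    intro z hz
    have hz' : z ∈ Aᶜ := by simpa [hsdef] using hz
    have h1 : ¬ (1/2 ≤ Tsum n u v (Pz z)) := by
      have := Finset.mem_compl.1 hz'
      simpa [hAdef, Finset.mem_filter] using this
    linarith [lt_of_not_ge h1]
  have hbge : ∀ z ∈ sB true, 0 ≤ Tsum n u v (Pz z) - 1/2 := by
    intro z hz
    have hz' : z ∈ A := by simpa [hsdef] using hz
    rw [hAdef] at hz'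
    have : 1/2 ≤ Tsum n u v (Pz z) := (Finset.mem_filter.1 hz').2
    linarith
  have hb_eq : ∀ b, q b * |Tsum n u v (Q b) - 1/2|
      = ∑ z ∈ sB b, p z * |Tsum n u v (Pz z) - 1/2| := by
    intro b
    have hD : q b * (Tsum n u v (Q b) - 1/2)
        = ∑ z ∈ sB b, p z * (Tsum n u v (Pz z) - 1/2) := by
      by_cases hb : q b = 0
      · rw [hb, zero_mul]
        exact (Finset.sum_eq_zero fun z hz => by rw [hpz0 b hb z hz, zero_mul]).symm
      · have hQb : Q b = fun x y u' v' => (q b)⁻¹ * ∑ z ∈ sB b, p z * Pz z x y u' v' := by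
          simp only [hQdef, hb, if_false]
        have hite : ∀ (c : Prop) [Decidable c] (a w : ℝ),
            (if c then a * w else 0) = a * (if c then w else 0) := by
          intros c _ a w; split <;> simp
        have hite2 : ∀ (c : Prop) [Decidable c] (f : Z → ℝ),
            (if c then ∑ z ∈ sB b, f z else 0) = ∑ z ∈ sB b, if c then f z else 0 := by
          intros c _ f; split <;> simp
        have hTQ : Tsum n u v (Q b) = (q b)⁻¹ * ∑ z ∈ sB b, p z * Tsum n u v (Pz z) := by
          rw [hQb]
          unfold Tsum
          simp_rw [hite, ← Finset.mul_sum]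
          congr 1
          simp_rw [hite2]
          rw [swap]
          refine Finset.sum_congr rfl fun z _ => ?_
          simp_rw [hite, ← Finset.mul_sum]
        have hsum : ∑ z ∈ sB b, p z * (Tsum n u v (Pz z) - 1/2)
            = (∑ z ∈ sB b, p z * Tsum n u v (Pz z)) - (∑ z ∈ sB b, p z) * (1/2) := by
          simp_rw [mul_sub]
          rw [Finset.sum_sub_distrib, Finset.sum_mul]
        rw [hTQ, hsum, mul_sub, ← mul_assoc, mul_inv_cancel₀ hb, one_mul]
    have h1 : q b * |Tsum n u v (Q b) - 1/2|
        = |∑ z ∈ sB b, p z * (Tsum n u v (Pz z) - 1/2)| := by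
      rw [← hD, abs_mul, abs_of_nonneg (hq0 b)]
    rw [h1]
    cases b
    · rw [abs_of_nonpos (Finset.sum_nonpos fun z hz =>
        mul_nonpos_of_nonneg_of_nonpos (hp z) (hble z hz))]
      rw [← Finset.sum_neg_distrib]
      refine Finset.sum_congr rfl fun z hz => ?_
      have hz' : z ∈ Aᶜ := by simpa [hsdef] using hz
      rw [habs' z hz']
      ring
    · rw [abs_of_nonneg (Finset.sum_nonneg fun z hz =>
        mul_nonneg (hp z) (hbge z hz))]
      refine Finset.sum_congr rfl fun z hz => ?_
      have hz' : z ∈ A := by simpa [hsdef] using hz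
      rw [habs z hz']
  show (∑ b, q b * |Tsum n u v (Q b) - 1/2|)
      = ∑ z, p z * |Tsum n u v (Pz z) - 1/2|
  rw [Fintype.sum_bool, hb_eq, hb_eq]
  have hst : sB true = A := by simp [hsdef]
  have hsf : sB false = Aᶜ := by simp [hsdef]
  rw [hst, hsf, Finset.sum_add_sum_compl]
end

section
/- Let n ≥ 1, let J be a finite set with weights q_j ≥ 0 satisfying ∑_{j∈J} q_j = 1, and for each j ∈ J let ε_1^j,…,ε_n^j ∈ [0,1/4]. Let P be the 2n-partite binary box P(x,y|u,v) = ∑_{j∈J} q_j · ∏_{i=1}^n P_{ε_i^j}(x_i,y_i|u_i,v_i), a convex combination of products of unbiased boxes. Then for every box partition {(p^z, P^z)}_{z∈𝒵} of P in which every P^z is a 2n-partite binary box, and for every fixed input (u,v) ∈ ({0,1}^n)²: ∑_{z∈𝒵} p^z · |∑_{(x,y) : x_1⊕⋯⊕x_n = 0} P^z(x,y|u,v) − 1/2| ≤ ∑_{j∈J} q_j · (1/2)·∏_{i=1}^n (4ε_i^j). -/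
open Finset
set_option maxHeartbeats 1000000
set_option linter.unusedVariables false
set_option linter.unreachableTactic false
set_option linter.unusedTactic false
set_option linter.unusedSectionVars false


noncomputable section XPA

abbrev BoxFn (ι : Type*) := (ι → Bool) → (ι → Bool) → (ι → Bool) → (ι → Bool) → ℝ

def sg (b : Bool) : ℝ := if b then -1 else 1

variable {ι : Type*} [Fintype ι] [DecidableEq ι]

lemma SL (a : Bool → Bool → Bool → Bool → ℝ)
    (hA : ∀ c β β' γ, ∑ b, a b c β γ = ∑ b, a b c β' γ)
    (hB : ∀ b β γ γ', ∑ c, a b c β γ = ∑ c, a b c β γ')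
    (β γ : Bool) :
    |∑ b, ∑ c, sg b * a b c β γ|
      ≤ ∑ β', ∑ γ', ∑ b, ∑ c,
          (if xor b c ≠ (β' && γ') then (1:ℝ) else 0) * |a b c β' γ'| := by
  simp only [Fintype.sum_bool] at hA hB ⊢
  rw [abs_le]
  norm_num [sg]
  constructor <;>
  · cases β <;> cases γ <;>
    linarith [hA false false true false, hA true false true false,
      hA false false true true, hA true false true true,
      hB false false false true, hB true false false true,
      hB false true false true, hB true true false true,
      le_abs_self (a false false false false), neg_abs_le (a false false false false),
      le_abs_self (a false true false false), neg_abs_le (a false true false false),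
      le_abs_self (a true false false false), neg_abs_le (a true false false false),
      le_abs_self (a true true false false), neg_abs_le (a true true false false),
      le_abs_self (a false false false true), neg_abs_le (a false false false true),
      le_abs_self (a false true false true), neg_abs_le (a false true false true),
      le_abs_self (a true false false true), neg_abs_le (a true false false true),
      le_abs_self (a true true false true), neg_abs_le (a true true false true),
      le_abs_self (a false false true false), neg_abs_le (a false false true false),
      le_abs_self (a false true true false), neg_abs_le (a false true true false),
      le_abs_self (a true false true false), neg_abs_le (a true false true false),
      le_abs_self (a true true true false), neg_abs_le (a true true true false),
      le_abs_self (a false false true true), neg_abs_le (a false false true true),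
      le_abs_self (a false true true true), neg_abs_le (a false true true true),
      le_abs_self (a true false true true), neg_abs_le (a true false true true),
      le_abs_self (a true true true true), neg_abs_le (a true true true true)]

lemma sum_update_flip (i : ι) (f : (ι → Bool) → ℝ) :
    ∑ x : ι → Bool, f (Function.update x i (!(x i))) = ∑ x : ι → Bool, f x := by
  have hinv : Function.Involutive (fun x : ι → Bool => Function.update x i (!(x i))) := by
    intro x
    simp only [Function.update_self, Function.update_idem, Bool.not_not, Function.update_eq_self]
  exact Fintype.sum_bijective _ hinv.bijective _ _ (fun x => rfl)

lemma sum_update_pair (i : ι) (f : (ι → Bool) → ℝ) :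
    ∑ x : ι → Bool, (f (Function.update x i false) + f (Function.update x i true))
      = 2 * ∑ x : ι → Bool, f x := by
  have h : ∀ x : ι → Bool, f (Function.update x i false) + f (Function.update x i true)
      = f x + f (Function.update x i (!(x i))) := by
    intro x
    cases hx : x i
    · have h1 : Function.update x i false = x := by
        conv_lhs => rw [← hx]
        exact Function.update_eq_self i x
      rw [h1]; simp
    · have h1 : Function.update x i true = x := by
        conv_lhs => rw [← hx]
        exact Function.update_eq_self i x
      rw [h1]; simp [add_comm]
  rw [Finset.sum_congr rfl (fun x _ => h x), Finset.sum_add_distrib, sum_update_flip]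
  ring

lemma prod_ind_eq (u v U V : ι → Bool) :
    (∏ j, (if U j = u j ∧ V j = v j then (1:ℝ) else 0)) = if U = u ∧ V = v then 1 else 0 := by
  by_cases h : U = u ∧ V = v
  · rw [if_pos h]
    exact Finset.prod_eq_one fun j _ => if_pos ⟨by rw [h.1], by rw [h.2]⟩
  · rw [if_neg h]
    have hex : ∃ j, ¬(U j = u j ∧ V j = v j) := by
      by_contra hc
      push_neg at hc
      exact h ⟨funext fun j => (hc j).1, funext fun j => (hc j).2⟩
    obtain ⟨j, hj⟩ := hex
    exact Finset.prod_eq_zero (mem_univ j) (if_neg hj)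

lemma sum_ind_collapse (u v : ι → Bool) (f : (ι → Bool) → (ι → Bool) → ℝ) :
    ∑ U, ∑ V, (∏ j, (if U j = u j ∧ V j = v j then (1:ℝ) else 0)) * f U V = f u v := by
  have h : ∀ U V, (∏ j, (if U j = u j ∧ V j = v j then (1:ℝ) else 0)) * f U V
      = if U = u then (if V = v then f U V else 0) else 0 := by
    intro U V
    rw [prod_ind_eq, ite_and, ite_mul, ite_mul, one_mul, zero_mul]
  simp_rw [h]
  have h2 : ∀ U, (∑ V, if U = u then (if V = v then f U V else 0) else 0)
      = if U = u then f U v else 0 := by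
    intro U
    by_cases hU : U = u
    · simp only [if_pos hU]
      exact Fintype.sum_ite_eq' v (f U)
    · simp only [if_neg hU, Finset.sum_const_zero]
  simp_rw [h2]
  exact Fintype.sum_ite_eq' u (fun U => f U v)


def aB (α : BoxFn ι) (i : ι) (s' : Finset ι) (u v : ι → Bool) (b c β γ : Bool) : ℝ :=
  ∑ x, ∑ y, if x i = b ∧ y i = c then
    (∏ j ∈ s', sg (x j)) * α x y (Function.update u i β) (Function.update v i γ) else 0

def resBox (α : BoxFn ι) (i : ι) (b c : Bool) : BoxFn ι :=
  fun x y U V => if x i = b ∧ y i = c then α x y U V else 0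

def CC (i : ι) (s' : Finset ι) (u v U V : ι → Bool) : ℝ :=
  ∏ j ∈ (insert i s')ᶜ, (if U j = u j ∧ V j = v j then (1:ℝ) else 0)

def DD (α : BoxFn ι) (s' : Finset ι) (x y U V : ι → Bool) : ℝ :=
  (∏ j ∈ s', (if xor (x j) (y j) ≠ (U j && V j) then (1:ℝ) else 0)) * |α x y U V|

def AA (α : BoxFn ι) (i : ι) (s' : Finset ι) (u v : ι → Bool) (β γ b c : Bool)
    (U V x y : ι → Bool) : ℝ :=
  ((if U i = β ∧ V i = γ then (1:ℝ) else 0) * (if x i = b ∧ y i = c then (1:ℝ) else 0)) *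
    (CC i s' u v U V * DD α s' x y U V)

lemma L1 (α : BoxFn ι) (i : ι) (s' : Finset ι) (u v : ι → Bool) (hi : i ∉ s') :
    ∑ x, ∑ y, (∏ j ∈ insert i s', sg (x j)) * α x y u v
      = ∑ b, ∑ c, sg b * aB α i s' u v b c (u i) (v i) := by
  simp only [Fintype.sum_bool, aB, Function.update_eq_self, Finset.mul_sum]
  simp only [← Finset.sum_add_distrib]
  refine Finset.sum_congr rfl fun x _ => Finset.sum_congr rfl fun y _ => ?_
  rw [Finset.prod_insert hi]
  cases hx : x i <;> cases hy : y i <;> simp [sg] <;> ring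

lemma L2 (α : BoxFn ι) (i : ι) (s' : Finset ι) (u v : ι → Bool) (hi : i ∉ s')
    (hxNS : ∀ x y w z, ∀ b : Bool,
      ∑ cc, α (Function.update x i cc) y w z
        = ∑ cc, α (Function.update x i cc) y (Function.update w i b) z) :
    ∀ c β β' γ, ∑ b, aB α i s' u v b c β γ = ∑ b, aB α i s' u v b c β' γ := by
  intro c β β' γ
  have hchi : ∀ (x : ι → Bool) (b' : Bool),
      (∏ j ∈ s', sg ((Function.update x i b') j)) = ∏ j ∈ s', sg (x j) :=
    fun x b' => Finset.prod_congr rfl fun j hj => by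
      rw [Function.update_of_ne (ne_of_mem_of_not_mem hj hi)]
  have hcol : ∀ β0 : Bool, ∑ b, aB α i s' u v b c β0 γ
      = ∑ x, ∑ y, (if y i = c then (∏ j ∈ s', sg (x j)) *
          α x y (Function.update u i β0) (Function.update v i γ) else 0) := by
    intro β0
    simp only [Fintype.sum_bool, aB, ← Finset.sum_add_distrib]
    refine Finset.sum_congr rfl fun x _ => Finset.sum_congr rfl fun y _ => ?_
    cases hx : x i <;> simp
  rw [hcol β, hcol β']
  have hpair : ∀ β0 : Bool,
      2 * (∑ x, ∑ y, (if y i = c then (∏ j ∈ s', sg (x j)) *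
          α x y (Function.update u i β0) (Function.update v i γ) else 0))
      = ∑ x : ι → Bool, ∑ y, (if y i = c then (∏ j ∈ s', sg (x j)) *
          (α (Function.update x i false) y (Function.update u i β0) (Function.update v i γ)
           + α (Function.update x i true) y (Function.update u i β0) (Function.update v i γ)) else 0) := by
    intro β0
    rw [← sum_update_pair i]
    refine Finset.sum_congr rfl fun x _ => ?_
    rw [← Finset.sum_add_distrib]
    refine Finset.sum_congr rfl fun y _ => ?_
    rw [hchi, hchi]
    by_cases hy : y i = c
    · simp only [if_pos hy]; ring
    · simp only [if_neg hy, add_zero]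
  have key : ∀ x y,
      α (Function.update x i false) y (Function.update u i β) (Function.update v i γ)
        + α (Function.update x i true) y (Function.update u i β) (Function.update v i γ)
      = α (Function.update x i false) y (Function.update u i β') (Function.update v i γ)
        + α (Function.update x i true) y (Function.update u i β') (Function.update v i γ) := by
    intro x y
    have h := hxNS x y (Function.update u i β) (Function.update v i γ) β'
    simp only [Fintype.sum_bool, Function.update_idem] at h
    linarith
  have h2 := hpair β
  have h2' := hpair β'
  have heq : (∑ x : ι → Bool, ∑ y, (if y i = c then (∏ j ∈ s', sg (x j)) *
          (α (Function.update x i false) y (Function.update u i β) (Function.update v i γ)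
           + α (Function.update x i true) y (Function.update u i β) (Function.update v i γ)) else 0))
      = ∑ x : ι → Bool, ∑ y, (if y i = c then (∏ j ∈ s', sg (x j)) *
          (α (Function.update x i false) y (Function.update u i β') (Function.update v i γ)
           + α (Function.update x i true) y (Function.update u i β') (Function.update v i γ)) else 0) := by
    refine Finset.sum_congr rfl fun x _ => Finset.sum_congr rfl fun y _ => ?_
    rw [key]
  linarith [h2, h2', heq]

lemma L3 (α : BoxFn ι) (i : ι) (s' : Finset ι) (u v : ι → Bool) (hi : i ∉ s')
    (hyNS : ∀ x y w z, ∀ b : Bool,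
      ∑ cc, α x (Function.update y i cc) w z
        = ∑ cc, α x (Function.update y i cc) w (Function.update z i b)) :
    ∀ b β γ γ', ∑ c, aB α i s' u v b c β γ = ∑ c, aB α i s' u v b c β γ' := by
  intro b β γ γ'
  have hcol : ∀ γ0 : Bool, ∑ c, aB α i s' u v b c β γ0
      = ∑ x, ∑ y, (if x i = b then (∏ j ∈ s', sg (x j)) *
          α x y (Function.update u i β) (Function.update v i γ0) else 0) := by
    intro γ0
    simp only [Fintype.sum_bool, aB, ← Finset.sum_add_distrib]
    refine Finset.sum_congr rfl fun x _ => Finset.sum_congr rfl fun y _ => ?_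
    cases hy : y i <;> simp
  rw [hcol γ, hcol γ']
  refine Finset.sum_congr rfl fun x _ => ?_
  have hpair : ∀ γ0 : Bool,
      2 * (∑ y, (if x i = b then (∏ j ∈ s', sg (x j)) *
          α x y (Function.update u i β) (Function.update v i γ0) else 0))
      = ∑ y : ι → Bool, (if x i = b then (∏ j ∈ s', sg (x j)) *
          (α x (Function.update y i false) (Function.update u i β) (Function.update v i γ0)
           + α x (Function.update y i true) (Function.update u i β) (Function.update v i γ0)) else 0) := by
    intro γ0
    rw [← sum_update_pair i]
    refine Finset.sum_congr rfl fun y _ => ?_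
    by_cases hx : x i = b
    · simp only [if_pos hx]; ring
    · simp only [if_neg hx, add_zero]
  have key : ∀ y,
      α x (Function.update y i false) (Function.update u i β) (Function.update v i γ)
        + α x (Function.update y i true) (Function.update u i β) (Function.update v i γ)
      = α x (Function.update y i false) (Function.update u i β) (Function.update v i γ')
        + α x (Function.update y i true) (Function.update u i β) (Function.update v i γ') := by
    intro y
    have h := hyNS x y (Function.update u i β) (Function.update v i γ) γ'
    simp only [Fintype.sum_bool, Function.update_idem] at h
    linarith
  have h2 := hpair γ
  have h2' := hpair γ'
  have heq : (∑ y : ι → Bool, (if x i = b then (∏ j ∈ s', sg (x j)) *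
          (α x (Function.update y i false) (Function.update u i β) (Function.update v i γ)
           + α x (Function.update y i true) (Function.update u i β) (Function.update v i γ)) else 0))
      = ∑ y : ι → Bool, (if x i = b then (∏ j ∈ s', sg (x j)) *
          (α x (Function.update y i false) (Function.update u i β) (Function.update v i γ')
           + α x (Function.update y i true) (Function.update u i β) (Function.update v i γ')) else 0) := by
    refine Finset.sum_congr rfl fun y _ => ?_
    rw [key]
  linarith [h2, h2', heq]

lemma resNSx (α : BoxFn ι) (i : ι) (s' : Finset ι) (hi : i ∉ s') (b c : Bool)
    (hx : ∀ x y w z, ∀ j ∈ insert i s', ∀ b0 : Bool,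
      ∑ cc, α (Function.update x j cc) y w z
        = ∑ cc, α (Function.update x j cc) y (Function.update w j b0) z) :
    ∀ x y w z, ∀ j ∈ s', ∀ b0 : Bool,
      ∑ cc, resBox α i b c (Function.update x j cc) y w z
        = ∑ cc, resBox α i b c (Function.update x j cc) y (Function.update w j b0) z := by
  intro x y w z j hj b0
  have hij : i ≠ j := fun h => hi (h ▸ hj)
  simp only [resBox, Function.update_of_ne hij]
  by_cases hc : x i = b ∧ y i = c
  · simp only [if_pos hc]
    exact hx x y w z j (mem_insert_of_mem hj) b0
  · simp only [if_neg hc, Finset.sum_const_zero]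

lemma resNSy (α : BoxFn ι) (i : ι) (s' : Finset ι) (hi : i ∉ s') (b c : Bool)
    (hy : ∀ x y w z, ∀ j ∈ insert i s', ∀ b0 : Bool,
      ∑ cc, α x (Function.update y j cc) w z
        = ∑ cc, α x (Function.update y j cc) w (Function.update z j b0)) :
    ∀ x y w z, ∀ j ∈ s', ∀ b0 : Bool,
      ∑ cc, resBox α i b c x (Function.update y j cc) w z
        = ∑ cc, resBox α i b c x (Function.update y j cc) w (Function.update z j b0) := by
  intro x y w z j hj b0
  have hij : i ≠ j := fun h => hi (h ▸ hj)
  simp only [resBox, Function.update_of_ne hij]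
  by_cases hc : x i = b ∧ y i = c
  · simp only [if_pos hc]
    exact hy x y w z j (mem_insert_of_mem hj) b0
  · simp only [if_neg hc, Finset.sum_const_zero]

lemma L5 (α : BoxFn ι) (i : ι) (s' : Finset ι) (u v : ι → Bool) (hi : i ∉ s')
    (b c β γ : Bool) :
    ∑ U, ∑ V, (∏ j ∈ s'ᶜ, (if U j = (Function.update u i β) j ∧ V j = (Function.update v i γ) j
            then (1:ℝ) else 0)) *
        ∑ x, ∑ y, (∏ j ∈ s', (if xor (x j) (y j) ≠ (U j && V j) then (1:ℝ) else 0)) *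
          |resBox α i b c x y U V|
      = ∑ U, ∑ V, ∑ x, ∑ y, AA α i s' u v β γ b c U V x y := by
  have hs : s'ᶜ = insert i ((insert i s')ᶜ) := by
    rw [Finset.compl_insert]
    exact (Finset.insert_erase (Finset.mem_compl.mpr hi)).symm
  have hins : i ∉ (insert i s')ᶜ := by simp
  refine Finset.sum_congr rfl fun U _ => Finset.sum_congr rfl fun V _ => ?_
  have hprod : (∏ j ∈ s'ᶜ, (if U j = (Function.update u i β) j ∧ V j = (Function.update v i γ) j
          then (1:ℝ) else 0))
      = (if U i = β ∧ V i = γ then (1:ℝ) else 0) * CC i s' u v U V := by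
    rw [hs, Finset.prod_insert hins]
    congr 1
    · rw [Function.update_self, Function.update_self]
    · refine Finset.prod_congr rfl fun j hj => ?_
      have hji : j ≠ i := by
        intro h
        rw [h] at hj
        exact hins hj
      rw [Function.update_of_ne hji, Function.update_of_ne hji]
  rw [hprod]
  simp only [Finset.mul_sum]
  refine Finset.sum_congr rfl fun x _ => Finset.sum_congr rfl fun y _ => ?_
  simp only [AA, DD, resBox]
  by_cases hbc : x i = b ∧ y i = c
  · simp only [if_pos hbc]; ring
  · simp only [if_neg hbc, abs_zero]; ring

lemma L6 (α : BoxFn ι) (i : ι) (s' : Finset ι) (u v : ι → Bool) (hi : i ∉ s')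
    (U V x y : ι → Bool) :
    CC i s' u v U V * ((∏ j ∈ insert i s', (if xor (x j) (y j) ≠ (U j && V j) then (1:ℝ) else 0))
        * |α x y U V|)
      = AA α i s' u v true true true true U V x y + AA α i s' u v true true false false U V x y
      + AA α i s' u v true false true false U V x y + AA α i s' u v true false false true U V x y
      + AA α i s' u v false true true false U V x y + AA α i s' u v false true false true U V x y
      + AA α i s' u v false false true false U V x y + AA α i s' u v false false false true U V x y := by
  rw [Finset.prod_insert hi]
  cases hU : U i <;> cases hV : V i <;> cases hx2 : x i <;> cases hy2 : y i <;>
    simp [AA, DD, hU, hV, hx2, hy2] <;> ring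

lemma MI (s : Finset ι) :
    ∀ (α : BoxFn ι),
    (∀ x y u v, ∀ i ∈ s, ∀ b : Bool,
      ∑ c, α (Function.update x i c) y u v
        = ∑ c, α (Function.update x i c) y (Function.update u i b) v) →
    (∀ x y u v, ∀ i ∈ s, ∀ b : Bool,
      ∑ c, α x (Function.update y i c) u v
        = ∑ c, α x (Function.update y i c) u (Function.update v i b)) →
    ∀ u v : ι → Bool,
    |∑ x, ∑ y, (∏ j ∈ s, sg (x j)) * α x y u v|
      ≤ ∑ U, ∑ V, (∏ j ∈ sᶜ, (if U j = u j ∧ V j = v j then (1:ℝ) else 0)) *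
          ∑ x, ∑ y, (∏ j ∈ s, (if xor (x j) (y j) ≠ (U j && V j) then (1:ℝ) else 0)) *
            |α x y U V| := by
  induction s using Finset.induction_on with
  | empty =>
    intro α _ _ u v
    simp only [Finset.prod_empty, one_mul, Finset.compl_empty]
    rw [sum_ind_collapse u v (fun U V => ∑ x, ∑ y, |α x y U V|)]
    calc |∑ x, ∑ y, α x y u v| ≤ ∑ x, |∑ y, α x y u v| := Finset.abs_sum_le_sum_abs _ _
      _ ≤ ∑ x, ∑ y, |α x y u v| :=
        Finset.sum_le_sum fun x _ => Finset.abs_sum_le_sum_abs _ _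
  | @insert i s' hi IH =>
    intro α hx hy u v
    rw [L1 α i s' u v hi]
    have hSL := SL (aB α i s' u v)
      (L2 α i s' u v hi (fun x y w z b => hx x y w z i (mem_insert_self i s') b))
      (L3 α i s' u v hi (fun x y w z b => hy x y w z i (mem_insert_self i s') b))
      (u i) (v i)
    refine le_trans hSL ?_
    have hstep : ∀ b c β γ, |aB α i s' u v b c β γ|
        ≤ ∑ U, ∑ V, (∏ j ∈ s'ᶜ, (if U j = (Function.update u i β) j ∧
              V j = (Function.update v i γ) j then (1:ℝ) else 0)) *
            ∑ x, ∑ y, (∏ j ∈ s', (if xor (x j) (y j) ≠ (U j && V j) then (1:ℝ) else 0)) *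
              |resBox α i b c x y U V| := by
      intro b c β γ
      have h1 : aB α i s' u v b c β γ
          = ∑ x, ∑ y, (∏ j ∈ s', sg (x j)) *
              resBox α i b c x y (Function.update u i β) (Function.update v i γ) := by
        simp only [aB, resBox, mul_ite, mul_zero]
      rw [h1]
      exact IH (resBox α i b c) (resNSx α i s' hi b c hx) (resNSy α i s' hi b c hy)
        (Function.update u i β) (Function.update v i γ)
    calc ∑ β', ∑ γ', ∑ b, ∑ c, (if xor b c ≠ (β' && γ') then (1:ℝ) else 0) *
            |aB α i s' u v b c β' γ'|
        ≤ ∑ β', ∑ γ', ∑ b, ∑ c, (if xor b c ≠ (β' && γ') then (1:ℝ) else 0) *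
            ∑ U, ∑ V, (∏ j ∈ s'ᶜ, (if U j = (Function.update u i β') j ∧
                V j = (Function.update v i γ') j then (1:ℝ) else 0)) *
              ∑ x, ∑ y, (∏ j ∈ s', (if xor (x j) (y j) ≠ (U j && V j) then (1:ℝ) else 0)) *
                |resBox α i b c x y U V| := by
          refine Finset.sum_le_sum fun β' _ => Finset.sum_le_sum fun γ' _ =>
            Finset.sum_le_sum fun b _ => Finset.sum_le_sum fun c _ => ?_
          refine mul_le_mul_of_nonneg_left (hstep b c β' γ') ?_
          positivity
      _ = ∑ β', ∑ γ', ∑ b, ∑ c, (if xor b c ≠ (β' && γ') then (1:ℝ) else 0) *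
            ∑ U, ∑ V, ∑ x, ∑ y, AA α i s' u v β' γ' b c U V x y := by
          refine Finset.sum_congr rfl fun β' _ => Finset.sum_congr rfl fun γ' _ =>
            Finset.sum_congr rfl fun b _ => Finset.sum_congr rfl fun c _ => ?_
          rw [L5 α i s' u v hi b c β' γ']
      _ = ∑ U, ∑ V, (∏ j ∈ (insert i s')ᶜ, (if U j = u j ∧ V j = v j then (1:ℝ) else 0)) *
            ∑ x, ∑ y, (∏ j ∈ insert i s', (if xor (x j) (y j) ≠ (U j && V j) then (1:ℝ) else 0)) *
              |α x y U V| := by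
          have hRHS : ∀ U V : ι → Bool,
              (∏ j ∈ (insert i s')ᶜ, (if U j = u j ∧ V j = v j then (1:ℝ) else 0)) *
                ∑ x, ∑ y, (∏ j ∈ insert i s', (if xor (x j) (y j) ≠ (U j && V j) then (1:ℝ) else 0)) *
                  |α x y U V|
              = ∑ x, ∑ y,
                (AA α i s' u v true true true true U V x y + AA α i s' u v true true false false U V x y
                + AA α i s' u v true false true false U V x y + AA α i s' u v true false false true U V x y
                + AA α i s' u v false true true false U V x y + AA α i s' u v false true false true U V x y
                + AA α i s' u v false false true false U V x y + AA α i s' u v false false false true U V x y) := by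
            intro U V
            simp only [Finset.mul_sum]
            refine Finset.sum_congr rfl fun x _ => Finset.sum_congr rfl fun y _ => ?_
            exact L6 α i s' u v hi U V x y
          simp only [hRHS, Finset.sum_add_distrib]
          simp only [Finset.mul_sum, Fintype.sum_bool]
          norm_num [Finset.sum_const_zero]
          ring
end XPA


lemma hfact {ι : Type*} [Fintype ι] [DecidableEq ι] (f : ι → Bool → Bool → ℝ) :
    ∑ x : ι → Bool, ∑ y : ι → Bool, ∏ i, f i (x i) (y i)
      = ∏ i, (∑ b, ∑ c, f i b c) := by
  have hpi : (Finset.univ : Finset (ι → Bool))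
      = Fintype.piFinset (fun _ : ι => (Finset.univ : Finset Bool)) := Fintype.piFinset_univ.symm
  have h1 : ∀ x : ι → Bool, ∑ y : ι → Bool, ∏ i, f i (x i) (y i)
      = ∏ i, ∑ c, f i (x i) c := by
    intro x
    conv_lhs => rw [hpi]
    rw [← Finset.prod_univ_sum]
  simp_rw [h1]
  conv_lhs => rw [hpi]
  rw [← Finset.prod_univ_sum (fun _ : ι => (Finset.univ : Finset Bool))
    (fun i b => ∑ c, f i b c)]

lemma sum_comm3 {A B C : Type*} [Fintype A] [Fintype B] [Fintype C] (f : A → B → C → ℝ) :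
    ∑ a : A, ∑ b : B, ∑ c : C, f a b c = ∑ c, ∑ a, ∑ b, f a b c := by
  calc ∑ a : A, ∑ b : B, ∑ c : C, f a b c
      = ∑ a : A, ∑ c : C, ∑ b : B, f a b c :=
        Finset.sum_congr rfl fun a _ => Finset.sum_comm
    _ = ∑ c : C, ∑ a : A, ∑ b : B, f a b c := Finset.sum_comm

lemma hone (e : ℝ) (b1 b2 : Bool) :
    ∑ b, ∑ c, (if xor b c ≠ (b1 && b2) then (1:ℝ) else 0) * Peps e b c b1 b2 = e := by
  cases b1 <;> cases b2 <;> simp [Fintype.sum_bool, Peps] <;> ring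

lemma parity_prod {n : ℕ} (x : Fin n → Bool) :
    (∏ j, sg (x j))
      = if (Finset.univ.filter fun i => x i = true).card % 2 = 0 then (1:ℝ) else -1 := by
  rw [← Finset.prod_filter_mul_prod_filter_not Finset.univ (fun j => x j = true) (fun j => sg (x j))]
  have h1 : ∏ j ∈ Finset.univ.filter (fun j => x j = true), sg (x j)
      = (-1:ℝ) ^ (Finset.univ.filter fun j => x j = true).card := by
    rw [Finset.prod_congr rfl (fun j hj => ?_), Finset.prod_const]
    simp [sg, (Finset.mem_filter.mp hj).2]
  have h2 : ∏ j ∈ Finset.univ.filter (fun j => ¬ x j = true), sg (x j) = 1 := by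
    refine Finset.prod_eq_one fun j hj => ?_
    have := (Finset.mem_filter.mp hj).2
    simp [sg, Bool.not_eq_true] at this ⊢
    simp [this]
  rw [h1, h2, mul_one]
  rcases Nat.even_or_odd (Finset.univ.filter fun j => x j = true).card with he | ho
  · rw [if_pos (Nat.even_iff.mp he), Even.neg_one_pow he]
  · rw [if_neg (by rw [Nat.odd_iff.mp ho]; norm_num), Odd.neg_one_pow ho]


/-- for a convex combination of products of unbiased boxes, the distance from
uniform of the XOR of Alice's output bits under any box partition is at most the
corresponding convex combination `∑_j q_j · (1/2)·∏_i (4ε_i^j)`. -/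
theorem xor_privacy_amplification_convex_combination
    (n : ℕ) (hn : 1 ≤ n)
    {J : Type*} [Fintype J]
    (q : J → ℝ) (hq0 : ∀ j, 0 ≤ q j) (hq1 : ∑ j, q j = 1)
    (ε : J → Fin n → ℝ)
    (hε0 : ∀ j i, 0 ≤ ε j i) (hε1 : ∀ j i, ε j i ≤ 1/4)
    {Z : Type*} [Fintype Z]
    (p : Z → ℝ)
    (Pz : Z → (Fin n → Bool) → (Fin n → Bool) → (Fin n → Bool) → (Fin n → Bool) → ℝ)
    (hp : ∀ z, 0 ≤ p z) (hPz : ∀ z, NSBox n (Pz z))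
    (hpart : ∀ x y u v, ∑ z, p z * Pz z x y u v
        = ∑ j, q j * ∏ i, Peps (ε j i) (x i) (y i) (u i) (v i)) :
    ∀ u v, ∑ z, p z *
        |(∑ x, ∑ y, if (Finset.univ.filter fun i => x i = true).card % 2 = 0
            then Pz z x y u v else 0) - 1/2|
      ≤ ∑ j, q j * ((1/2) * ∏ i, (4 * ε j i)) := by
  intro u v
  classical
  -- MI applied to each Pz, with s = univ
  have hMI : ∀ z, |∑ x, ∑ y, (∏ j, sg (x j)) * Pz z x y u v|
      ≤ ∑ U, ∑ V, ∑ x, ∑ y,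
          (∏ j, (if xor (x j) (y j) ≠ (U j && V j) then (1:ℝ) else 0)) * Pz z x y U V := by
    intro z
    have h := MI (Finset.univ : Finset (Fin n)) (Pz z)
      (fun x y u' v' i _ b => (hPz z).2.2.1 x y u' v' i b)
      (fun x y u' v' i _ b => (hPz z).2.2.2 x y u' v' i b) u v
    rw [Finset.compl_univ] at h
    simp only [Finset.prod_empty, one_mul] at h
    refine le_trans h (le_of_eq ?_)
    refine Finset.sum_congr rfl fun U _ => Finset.sum_congr rfl fun V _ =>
      Finset.sum_congr rfl fun x _ => Finset.sum_congr rfl fun y _ => ?_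
    rw [abs_of_nonneg ((hPz z).1 x y U V)]
  -- parity rewriting
  have hpar : ∀ z, (∑ x, ∑ y, if (Finset.univ.filter fun i => x i = true).card % 2 = 0
          then Pz z x y u v else 0) - 1/2
      = (1/2) * ∑ x, ∑ y, (∏ j, sg (x j)) * Pz z x y u v := by
    intro z
    have hpw : ∀ (x : Fin n → Bool) (t : ℝ),
        (if (Finset.univ.filter fun i => x i = true).card % 2 = 0 then t else 0)
        = t/2 + (∏ j, sg (x j)) * t / 2 := by
      intro x t
      rw [parity_prod]
      by_cases hc : (Finset.univ.filter fun i => x i = true).card % 2 = 0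
      · rw [if_pos hc, if_pos hc]; ring
      · rw [if_neg hc, if_neg hc]; ring
    have h3 : (∑ x, ∑ y, if (Finset.univ.filter fun i => x i = true).card % 2 = 0
            then Pz z x y u v else 0)
        = (∑ x, ∑ y, Pz z x y u v)/2 + (∑ x, ∑ y, (∏ j, sg (x j)) * Pz z x y u v)/2 := by
      rw [Finset.sum_congr rfl (fun x _ => Finset.sum_congr rfl
        (fun y _ => hpw x (Pz z x y u v)))]
      simp only [Finset.sum_add_distrib, ← Finset.sum_div]
    rw [h3, (hPz z).2.1 u v]
    ring
  calc ∑ z, p z * |(∑ x, ∑ y, if (Finset.univ.filter fun i => x i = true).card % 2 = 0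
            then Pz z x y u v else 0) - 1/2|
      = ∑ z, p z * ((1/2) * |∑ x, ∑ y, (∏ j, sg (x j)) * Pz z x y u v|) := by
        refine Finset.sum_congr rfl fun z _ => ?_
        rw [hpar z, abs_mul]
        norm_num
    _ ≤ ∑ z, p z * ((1/2) * (∑ U, ∑ V, ∑ x, ∑ y,
          (∏ j, (if xor (x j) (y j) ≠ (U j && V j) then (1:ℝ) else 0)) * Pz z x y U V)) := by
        refine Finset.sum_le_sum fun z _ => ?_
        exact mul_le_mul_of_nonneg_left
          (mul_le_mul_of_nonneg_left (hMI z) (by norm_num)) (hp z)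
    _ = (1/2) * ∑ z, p z * (∑ U, ∑ V, ∑ x, ∑ y,
          (∏ j, (if xor (x j) (y j) ≠ (U j && V j) then (1:ℝ) else 0)) * Pz z x y U V) := by
        rw [Finset.mul_sum]
        exact Finset.sum_congr rfl fun z _ => by ring
    _ = (1/2) * ∑ U : Fin n → Bool, ∑ V : Fin n → Bool, ∑ x : Fin n → Bool, ∑ y : Fin n → Bool,
          (∏ j, (if xor (x j) (y j) ≠ (U j && V j) then (1:ℝ) else 0)) *
            (∑ j, q j * ∏ i, Peps (ε j i) (x i) (y i) (U i) (V i)) := by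
        congr 1
        simp only [Finset.mul_sum]
        rw [Finset.sum_comm]
        refine Finset.sum_congr rfl fun U _ => ?_
        rw [Finset.sum_comm]
        refine Finset.sum_congr rfl fun V _ => ?_
        rw [Finset.sum_comm]
        refine Finset.sum_congr rfl fun x _ => ?_
        rw [Finset.sum_comm]
        refine Finset.sum_congr rfl fun y _ => ?_
        rw [show (∑ z, p z * ((∏ j, (if xor (x j) (y j) ≠ (U j && V j) then (1:ℝ) else 0)) *
              Pz z x y U V))
            = (∏ j, (if xor (x j) (y j) ≠ (U j && V j) then (1:ℝ) else 0)) *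
              ∑ z, p z * Pz z x y U V from by
          rw [Finset.mul_sum]; exact Finset.sum_congr rfl fun z _ => by ring,
          hpart x y U V, Finset.mul_sum]
    _ = (1/2) * ∑ U : Fin n → Bool, ∑ V : Fin n → Bool, ∑ j, q j * ∏ i, ε j i := by
        congr 1
        refine Finset.sum_congr rfl fun U _ => Finset.sum_congr rfl fun V _ => ?_
        calc ∑ x : Fin n → Bool, ∑ y : Fin n → Bool,
              (∏ j, (if xor (x j) (y j) ≠ (U j && V j) then (1:ℝ) else 0)) *
              (∑ j, q j * ∏ i, Peps (ε j i) (x i) (y i) (U i) (V i))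
            = ∑ j, ∑ x : Fin n → Bool, ∑ y : Fin n → Bool,
                q j * ∏ i, (if xor (x i) (y i) ≠ (U i && V i) then (1:ℝ) else 0) *
                  Peps (ε j i) (x i) (y i) (U i) (V i) := by
              have e1 : ∀ x y : Fin n → Bool,
                  (∏ j, (if xor (x j) (y j) ≠ (U j && V j) then (1:ℝ) else 0)) *
                    (∑ j, q j * ∏ i, Peps (ε j i) (x i) (y i) (U i) (V i))
                  = ∑ j, q j * ∏ i, (if xor (x i) (y i) ≠ (U i && V i) then (1:ℝ) else 0) *
                      Peps (ε j i) (x i) (y i) (U i) (V i) := by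
                intro x y
                rw [Finset.mul_sum]
                refine Finset.sum_congr rfl fun j _ => ?_
                rw [Finset.prod_mul_distrib]
                ring
              have e2 : (∑ x : Fin n → Bool, ∑ y : Fin n → Bool,
                    (∏ j, (if xor (x j) (y j) ≠ (U j && V j) then (1:ℝ) else 0)) *
                    (∑ j, q j * ∏ i, Peps (ε j i) (x i) (y i) (U i) (V i)))
                  = ∑ x : Fin n → Bool, ∑ y : Fin n → Bool, ∑ j,
                      q j * ∏ i, (if xor (x i) (y i) ≠ (U i && V i) then (1:ℝ) else 0) *
                        Peps (ε j i) (x i) (y i) (U i) (V i) :=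
                Finset.sum_congr rfl (fun x _ => Finset.sum_congr rfl (fun y _ => e1 x y))
              rw [e2]
              apply sum_comm3
          _ = ∑ j, q j * ∏ i, ε j i := by
              refine Finset.sum_congr rfl fun j _ => ?_
              simp only [← Finset.mul_sum]
              congr 1
              rw [hfact (fun i b c => (if xor b c ≠ (U i && V i) then (1:ℝ) else 0) *
                Peps (ε j i) b c (U i) (V i))]
              exact Finset.prod_congr rfl fun i _ => hone (ε j i) (U i) (V i)
    _ = (1/2) * ((2^n * 2^n : ℝ) * ∑ j, q j * ∏ i, ε j i) := by
        rw [Finset.sum_const, Finset.sum_const, Finset.card_univ, Fintype.card_fun,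
          Fintype.card_bool, Fintype.card_fin, nsmul_eq_mul]
        push_cast
        ring
    _ = ∑ j, q j * ((1/2) * ∏ i, (4 * ε j i)) := by
        have hprod4 : ∀ j, ∏ i, (4 * ε j i) = 4^n * ∏ i, ε j i := fun j => by
          rw [Finset.prod_mul_distrib, Finset.prod_const, Finset.card_univ, Fintype.card_fin]
        have h4 : (4:ℝ)^n = 2^n * 2^n := by rw [← mul_pow]; norm_num
        simp only [hprod4, h4]
        rw [Finset.mul_sum, Finset.mul_sum]
        exact Finset.sum_congr rfl fun j _ => by ring
end

section
/- Let n ≥ 1 and let ε satisfy 3/(8n+4) ≤ ε ≤ 3/4. Let P be the 2n-partite binary box P(x,y|u,v) = ∏_{i=1}^n P_ε(x_i,y_i|u_i,v_i). Then there exists a box partition {(p^z, P^z)}_{z∈𝒵} of P into 2n-partite binary boxes such that for every z ∈ 𝒵 with p^z > 0 there exists an index i ∈ {1,…,n} for which the i-th bipartite marginal of P^z — the binary bipartite box (x_i,y_i,u_i,v_i) ↦ ∑_{x_j, y_j (j≠i)} P^z(x,y|u,v), which is well defined by non-signaling — is local, i.e. a finite convex combination ∑_k w_k Q^k(x_i|u_i)R^k(y_i|v_i)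 of products of conditional distributions. -/
set_option maxHeartbeats 1600000

/-- A binary bipartite system is local if it is a finite convex combination of products of
conditional distributions. -/
def IsLocal2 (R : Bool → Bool → Bool → Bool → ℝ) : Prop :=
  ∃ (m : ℕ) (w : Fin m → ℝ)
    (QA : Fin m → Bool → Bool → ℝ) (QB : Fin m → Bool → Bool → ℝ),
    (∀ k, 0 ≤ w k) ∧ (∑ k, w k = 1) ∧
    (∀ k a c, 0 ≤ QA k a c) ∧ (∀ k c, ∑ a, QA k a c = 1) ∧
    (∀ k b d, 0 ≤ QB k b d) ∧ (∀ k d, ∑ b, QB k b d = 1) ∧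
    (∀ a b c d, R a b c d = ∑ k, w k * QA k a c * QB k b d)

/-- The `i`-th bipartite marginal of a `2n`-partite box, completed at the other interfaces
by the inputs `uu, vv`. -/
def bipartiteMarginal {n : ℕ}
    (R : (Fin n → Bool) → (Fin n → Bool) → (Fin n → Bool) → (Fin n → Bool) → ℝ)
    (i : Fin n) (uu vv : Fin n → Bool) :
    Bool → Bool → Bool → Bool → ℝ :=
  fun a b c d => ∑ x, ∑ y,
    if x i = a ∧ y i = b then R x y (Function.update uu i c) (Function.update vv i d) else 0

/-! ### Basic facts about `Peps` -/

lemma Peps_nonneg {ε : ℝ} (h0 : 0 ≤ ε) (h1 : ε ≤ 1) (a b c d : Bool) :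
    0 ≤ Peps ε a b c d := by
  unfold Peps; split <;> linarith

lemma sum_Peps_left (ε : ℝ) (b c d : Bool) : ∑ a : Bool, Peps ε a b c d = 1/2 := by
  cases b <;> cases c <;> cases d <;> simp [Peps, Fintype.sum_bool] <;> ring

lemma sum_Peps_right (ε : ℝ) (a c d : Bool) : ∑ b : Bool, Peps ε a b c d = 1/2 := by
  cases a <;> cases c <;> cases d <;> simp [Peps, Fintype.sum_bool] <;> ring

lemma Peps_mix (α : ℝ) (a b c d : Bool) :
    α * Peps (1/2) a b c d + (1 - α) * Peps 0 a b c d = Peps (α/2) a b c d := by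
  by_cases h : xor a b = (c && d) <;> simp [Peps, h] <;> ring

/-! ### A product/marginalization toolbox -/

lemma sum_ite_prod (n : ℕ) (g : Fin n → Bool → ℝ) (i : Fin n) (a : Bool) :
    ∑ x : Fin n → Bool, (if x i = a then ∏ j, g j (x j) else 0)
      = g i a * ∏ j ∈ Finset.univ.erase i, (∑ b, g j b) := by
  set f : Fin n → Bool → ℝ := fun j b => if j = i then (if b = a then g j b else 0) else g j b with hf
  have key : ∀ x : Fin n → Bool,
      (if x i = a then ∏ j, g j (x j) else 0) = ∏ j, f j (x j) := by
    intro x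
    have h2 : ∀ j ∈ Finset.univ.erase i, f j (x j) = g j (x j) := by
      intro j hj
      have : j ≠ i := (Finset.mem_erase.mp hj).1
      simp [hf, this]
    calc (if x i = a then ∏ j, g j (x j) else 0)
        = (if x i = a then g i (x i) else 0) * ∏ j ∈ Finset.univ.erase i, g j (x j) := by
          rw [← Finset.mul_prod_erase Finset.univ _ (Finset.mem_univ i)]
          by_cases h : x i = a <;> simp [h]
      _ = f i (x i) * ∏ j ∈ Finset.univ.erase i, f j (x j) := by
          rw [Finset.prod_congr rfl h2]; simp [hf]
      _ = ∏ j, f j (x j) := (Finset.mul_prod_erase Finset.univ (fun j => f j (x j)) (Finset.mem_univ i))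
  calc ∑ x : Fin n → Bool, (if x i = a then ∏ j, g j (x j) else 0)
      = ∑ x ∈ Fintype.piFinset (fun _ : Fin n => (Finset.univ : Finset Bool)), ∏ j, f j (x j) := by
        rw [Fintype.piFinset_univ]; exact Finset.sum_congr rfl fun x _ => key x
    _ = ∏ j, ∑ b, f j b := (Finset.prod_univ_sum _ f).symm
    _ = (∑ b, f i b) * ∏ j ∈ Finset.univ.erase i, (∑ b, f j b) :=
        (Finset.mul_prod_erase Finset.univ (fun j => ∑ b, f j b) (Finset.mem_univ i)).symm
    _ = g i a * ∏ j ∈ Finset.univ.erase i, (∑ b, g j b) := by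
        congr 1
        · simp [hf]
        · refine Finset.prod_congr rfl fun j hj => ?_
          have : j ≠ i := (Finset.mem_erase.mp hj).1
          simp [hf, this]

/-! ### Product boxes -/

noncomputable def prodBox (n : ℕ) (e : Fin n → ℝ) :
    (Fin n → Bool) → (Fin n → Bool) → (Fin n → Bool) → (Fin n → Bool) → ℝ :=
  fun x y u v => ∏ i, Peps (e i) (x i) (y i) (u i) (v i)

lemma sum_prodBox_xy (n : ℕ) (e : Fin n → ℝ) (u v : Fin n → Bool) :
    ∑ x, ∑ y, prodBox n e x y u v = 1 := by
  have inner : ∀ x : Fin n → Bool, ∑ y, prodBox n e x y u v = (1/2 : ℝ)^n := by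
    intro x
    have h := (Finset.prod_univ_sum (fun _ : Fin n => (Finset.univ : Finset Bool))
      (fun j b => Peps (e j) (x j) b (u j) (v j))).symm
    rw [Fintype.piFinset_univ] at h
    show ∑ y : Fin n → Bool, ∏ j, Peps (e j) (x j) (y j) (u j) (v j) = (1/2:ℝ)^n
    rw [h]
    simp_rw [sum_Peps_right]
    simp
  simp_rw [inner]
  rw [Finset.sum_const]
  simp only [Finset.card_univ, Fintype.card_fun, Fintype.card_bool, Fintype.card_fin,
    nsmul_eq_mul]
  push_cast
  rw [← mul_pow]
  norm_num

lemma NSBox_prodBox (n : ℕ) (e : Fin n → ℝ) (he : ∀ i, 0 ≤ e i ∧ e i ≤ 1) :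
    NSBox n (prodBox n e) := by
  refine ⟨?_, sum_prodBox_xy n e, ?_, ?_⟩
  · intro x y u v
    exact Finset.prod_nonneg fun i _ => Peps_nonneg (he i).1 (he i).2 _ _ _ _
  · intro x y u v i b
    have split : ∀ (u' : Fin n → Bool) (c : Bool),
        prodBox n e (Function.update x i c) y u' v
          = Peps (e i) c (y i) (u' i) (v i) *
            ∏ j ∈ Finset.univ.erase i, Peps (e j) (x j) (y j) (u' j) (v j) := by
      intro u' c
      rw [prodBox, ← Finset.mul_prod_erase Finset.univ
        (fun j => Peps (e j) (Function.update x i c j) (y j) (u' j) (v j)) (Finset.mem_univ i)]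
      congr 1
      · simp
      · refine Finset.prod_congr rfl fun j hj => ?_
        have hne : j ≠ i := (Finset.mem_erase.mp hj).1
        rw [Function.update_of_ne hne]
    have upd : ∀ j ∈ Finset.univ.erase i, (Function.update u i b) j = u j := by
      intro j hj; exact Function.update_of_ne (Finset.mem_erase.mp hj).1 _ _
    simp_rw [split, ← Finset.sum_mul, sum_Peps_left]
    congr 1
    refine Finset.prod_congr rfl fun j hj => ?_
    rw [upd j hj]
  · intro x y u v i b
    have split : ∀ (v' : Fin n → Bool) (c : Bool),
        prodBox n e x (Function.update y i c) u v'
          = Peps (e i) (x i) c (u i) (v' i) *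
            ∏ j ∈ Finset.univ.erase i, Peps (e j) (x j) (y j) (u j) (v' j) := by
      intro v' c
      rw [prodBox, ← Finset.mul_prod_erase Finset.univ
        (fun j => Peps (e j) (x j) (Function.update y i c j) (u j) (v' j)) (Finset.mem_univ i)]
      congr 1
      · simp
      · refine Finset.prod_congr rfl fun j hj => ?_
        have hne : j ≠ i := (Finset.mem_erase.mp hj).1
        rw [Function.update_of_ne hne]
    have upd : ∀ j ∈ Finset.univ.erase i, (Function.update v i b) j = v j := by
      intro j hj; exact Function.update_of_ne (Finset.mem_erase.mp hj).1 _ _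
    simp_rw [split, ← Finset.sum_mul, sum_Peps_right]
    congr 1
    refine Finset.prod_congr rfl fun j hj => ?_
    rw [upd j hj]

lemma NSBox_sum {n : ℕ} {ι : Type*} [Fintype ι] (coef : ι → ℝ)
    (B : ι → (Fin n → Bool) → (Fin n → Bool) → (Fin n → Bool) → (Fin n → Bool) → ℝ)
    (h0 : ∀ s, 0 ≤ coef s) (h1 : ∑ s, coef s = 1) (hB : ∀ s, NSBox n (B s)) :
    NSBox n (fun x y u v => ∑ s, coef s * B s x y u v) := by
  refine ⟨?_, ?_, ?_, ?_⟩
  · intro x y u v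
    exact Finset.sum_nonneg fun s _ => mul_nonneg (h0 s) ((hB s).1 x y u v)
  · intro u v
    calc ∑ x, ∑ y, ∑ s, coef s * B s x y u v
        = ∑ x : Fin n → Bool, ∑ s, ∑ y : Fin n → Bool, coef s * B s x y u v :=
          Finset.sum_congr rfl fun x _ => Finset.sum_comm
      _ = ∑ s, ∑ x, ∑ y, coef s * B s x y u v := Finset.sum_comm
      _ = ∑ s, coef s * (∑ x, ∑ y, B s x y u v) := by
          refine Finset.sum_congr rfl fun s _ => ?_
          simp_rw [Finset.mul_sum]
      _ = 1 := by simp_rw [(fun s => (hB s).2.1 u v)]; simpa using h1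
  · intro x y u v i b
    calc ∑ c : Bool, ∑ s, coef s * B s (Function.update x i c) y u v
        = ∑ s, coef s * ∑ c : Bool, B s (Function.update x i c) y u v := by
          rw [Finset.sum_comm]; exact Finset.sum_congr rfl fun s _ => by rw [Finset.mul_sum]
      _ = ∑ s, coef s * ∑ c : Bool, B s (Function.update x i c) y (Function.update u i b) v := by
          exact Finset.sum_congr rfl fun s _ => by rw [(hB s).2.2.1 x y u v i b]
      _ = ∑ c : Bool, ∑ s, coef s * B s (Function.update x i c) y (Function.update u i b) v := by
          rw [Finset.sum_comm]; exact Finset.sum_congr rfl fun c _ => by rw [← Finset.mul_sum]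
  · intro x y u v i b
    calc ∑ c : Bool, ∑ s, coef s * B s x (Function.update y i c) u v
        = ∑ s, coef s * ∑ c : Bool, B s x (Function.update y i c) u v := by
          rw [Finset.sum_comm]; exact Finset.sum_congr rfl fun s _ => by rw [Finset.mul_sum]
      _ = ∑ s, coef s * ∑ c : Bool, B s x (Function.update y i c) u (Function.update v i b) := by
          exact Finset.sum_congr rfl fun s _ => by rw [(hB s).2.2.2 x y u v i b]
      _ = ∑ c : Bool, ∑ s, coef s * B s x (Function.update y i c) u (Function.update v i b) := by
          rw [Finset.sum_comm]; exact Finset.sum_congr rfl fun c _ => by rw [← Finset.mul_sum]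

lemma marginal_prodBox (n : ℕ) (e : Fin n → ℝ) (i : Fin n) (uu vv : Fin n → Bool)
    (a b c d : Bool) :
    bipartiteMarginal (prodBox n e) i uu vv a b c d = Peps (e i) a b c d := by
  set u' := Function.update uu i c with hu'
  set v' := Function.update vv i d with hv'
  have hui : u' i = c := Function.update_self i c uu
  have hvi : v' i = d := Function.update_self i d vv
  have inner : ∀ x : Fin n → Bool,
      (∑ y : Fin n → Bool, if y i = b then prodBox n e x y u' v' else 0)
        = Peps (e i) (x i) b c d * ∏ j ∈ Finset.univ.erase i, (1/2 : ℝ) := by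
    intro x
    have h := sum_ite_prod n (fun j t => Peps (e j) (x j) t (u' j) (v' j)) i b
    calc (∑ y : Fin n → Bool, if y i = b then prodBox n e x y u' v' else 0)
        = ∑ y : Fin n → Bool,
            (if y i = b then ∏ j, Peps (e j) (x j) (y j) (u' j) (v' j) else 0) := rfl
      _ = Peps (e i) (x i) b (u' i) (v' i)
            * ∏ j ∈ Finset.univ.erase i, (∑ t, Peps (e j) (x j) t (u' j) (v' j)) := h
      _ = Peps (e i) (x i) b c d * ∏ j ∈ Finset.univ.erase i, (1/2 : ℝ) := by
          rw [hui, hvi]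
          congr 1
          exact Finset.prod_congr rfl fun j _ => sum_Peps_right _ _ _ _
  calc bipartiteMarginal (prodBox n e) i uu vv a b c d
      = ∑ x : Fin n → Bool, (if x i = a then
          (∑ y : Fin n → Bool, if y i = b then prodBox n e x y u' v' else 0) else 0) := by
        unfold bipartiteMarginal
        rw [← hu', ← hv']
        refine Finset.sum_congr rfl fun x _ => ?_
        by_cases h : x i = a
        · simp [h]
        · simp [h]
    _ = ∑ x : Fin n → Bool, (if x i = a then
          (∏ j, (fun j t => if j = i then Peps (e i) t b c d else (1/2 : ℝ)) j (x j)) else 0) := by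
        refine Finset.sum_congr rfl fun x _ => ?_
        by_cases h : x i = a
        · rw [if_pos h, if_pos h, inner x]
          rw [← Finset.mul_prod_erase Finset.univ
            (fun j => if j = i then Peps (e i) (x j) b c d else (1/2:ℝ)) (Finset.mem_univ i)]
          congr 1
          · simp
          · exact Finset.prod_congr rfl fun j hj => by simp [(Finset.mem_erase.mp hj).1]
        · rw [if_neg h, if_neg h]
    _ = Peps (e i) a b c d := by
        rw [sum_ite_prod n (fun j t => if j = i then Peps (e i) t b c d else (1/2 : ℝ)) i a]
        simp only [if_pos rfl]
        have h1 : ∀ j ∈ Finset.univ.erase i,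
            (∑ t : Bool, if j = i then Peps (e i) t b c d else (1/2:ℝ)) = 1 := by
          intro j hj
          rw [Fintype.sum_bool]
          simp [(Finset.mem_erase.mp hj).1]
          norm_num
        rw [Finset.prod_congr rfl h1, Finset.prod_const_one, mul_one]
        simp

/-! ### Locality of the isotropic boxes with `1/4 ≤ δ ≤ 3/4` -/

def bitF (k : Fin 16) (c : Bool) : Bool :=
  if c then decide (k.val / 2 % 2 = 1) else decide (k.val % 2 = 1)
def bitG (k : Fin 16) (d : Bool) : Bool :=
  if d then decide (k.val / 8 % 2 = 1) else decide (k.val / 4 % 2 = 1)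
def goodK (k : Fin 16) : Bool :=
  decide (k.val = 0 ∨ k.val = 2 ∨ k.val = 6 ∨ k.val = 7 ∨ k.val = 8 ∨ k.val = 9 ∨
    k.val = 13 ∨ k.val = 15)

lemma isLocal2_Peps {δ : ℝ} (h1 : 1/4 ≤ δ) (h2 : δ ≤ 3/4) : IsLocal2 (Peps δ) := by
  refine ⟨16, fun k => (if goodK k then (3 - 4*δ)/2 else (4*δ - 1)/2)/8,
    fun k a c => if a = bitF k c then 1 else 0,
    fun k b d => if b = bitG k d then 1 else 0, ?_, ?_, ?_, ?_, ?_, ?_, ?_⟩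
  · intro k; dsimp only; split <;> linarith
  · simp only [Fin.sum_univ_succ, Fin.sum_univ_zero]
    norm_num [goodK]
    ring
  · intro k a c; dsimp only; split <;> norm_num
  · intro k c; rw [Fintype.sum_bool]; rcases hb : bitF k c <;> simp [hb]
  · intro k b d; dsimp only; split <;> norm_num
  · intro k d; rw [Fintype.sum_bool]; rcases hb : bitG k d <;> simp [hb]
  · intro a b c d
    cases a <;> cases b <;> cases c <;> cases d <;>
      · simp only [Fin.sum_univ_succ, Fin.sum_univ_zero]
        norm_num [goodK, bitF, bitG, Peps]
        try ring

/-! ### The key arithmetic inequality -/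

lemma bern2 (x : ℝ) (hx : 0 ≤ x) (n : ℕ) :
    1 + n * x + (n * (n - 1)) / 2 * x ^ 2 ≤ (1 + x) ^ n := by
  induction n with
  | zero => norm_num
  | succ n ih =>
    have hnn : (0:ℝ) ≤ (n:ℝ) * ((n:ℝ) - 1) := by
      rcases Nat.eq_zero_or_pos n with h | h
      · simp [h]
      · have : (1:ℝ) ≤ (n:ℝ) := by exact_mod_cast h
        nlinarith
    have h2 : (1 + x) ^ (n + 1) = (1 + x) ^ n * (1 + x) := by ring
    have h3 : (1 + n * x + (n * (n - 1)) / 2 * x ^ 2) * (1 + x) ≤ (1 + x) ^ n * (1 + x) :=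
      mul_le_mul_of_nonneg_right ih (by linarith)
    push_cast
    nlinarith [mul_nonneg hnn (mul_nonneg hx (mul_nonneg hx hx))]

lemma crux (n : ℕ) (hn : 1 ≤ n) (q : ℝ) (h0 : 0 ≤ q)
    (h1 : q ≤ (4 * (n:ℝ) - 1) / (4 * (n:ℝ) + 2)) : q ^ n ≤ 1 / 2 := by
  have hN1' : (1:ℝ) ≤ (n:ℝ) := by exact_mod_cast hn
  set N := (n : ℝ) with hN
  have hN1 : (1:ℝ) ≤ N := hN1'
  have hA : (0:ℝ) < 4 * N - 1 := by linarith
  have hB : (0:ℝ) < 4 * N + 2 := by linarith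
  set x := 3 / (4 * N - 1) with hxdef
  have hx : 0 ≤ x := by positivity
  have hAx : (4 * N - 1) * x = 3 := by
    rw [hxdef]; field_simp
  have h2 : (2:ℝ) ≤ 1 + N * x + (N * (N - 1)) / 2 * x ^ 2 := by
    nlinarith [sq_nonneg x, mul_nonneg hx hx, sq_nonneg (N - 1), mul_nonneg (sub_nonneg.2 hN1) hx]
  have h3 : (2:ℝ) ≤ (1 + x) ^ n := le_trans h2 (bern2 x hx n)
  have hq : q ^ n ≤ ((4 * N - 1) / (4 * N + 2)) ^ n := pow_le_pow_left₀ h0 h1 n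
  have key : ((4 * N - 1) / (4 * N + 2)) * (1 + x) = 1 := by
    rw [hxdef]; field_simp; ring
  have h4 : ((4 * N - 1) / (4 * N + 2)) ^ n * (1 + x) ^ n = 1 := by
    rw [← mul_pow, key, one_pow]
  have h5 : (0:ℝ) < (1 + x) ^ n := by positivity
  have h6 : ((4 * N - 1) / (4 * N + 2)) ^ n = 1 / (1 + x) ^ n := by
    field_simp at h4 ⊢
    linarith [h4]
  rw [h6] at hq
  have : 1 / (1 + x) ^ n ≤ 1 / 2 := by
    apply one_div_le_one_div_of_le (by norm_num) h3
  linarith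

/-! ### The main theorem -/

/-- if `ε ≥ 3/(8n+4)`, Eve can attack `n` unbiased boxes with error `ε` so
that, for every outcome of positive weight, at least one of the `n` bipartite marginals of
the conditional box is local. -/
theorem collective_attack_makes_one_box_local
    (n : ℕ) (hn : 1 ≤ n) (ε : ℝ)
    (hε1 : 3 / (8 * (n : ℝ) + 4) ≤ ε) (hε2 : ε ≤ 3/4) :
    ∃ (m : ℕ) (p : Fin m → ℝ)
      (Pz : Fin m → (Fin n → Bool) → (Fin n → Bool) → (Fin n → Bool) → (Fin n → Bool) → ℝ),
      (∀ z, 0 ≤ p z) ∧ (∀ z, NSBox n (Pz z)) ∧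
      (∀ x y u v, ∑ z, p z * Pz z x y u v = ∏ i, Peps ε (x i) (y i) (u i) (v i)) ∧
      (∀ z, 0 < p z → ∃ i : Fin n, ∀ uu vv : Fin n → Bool,
        IsLocal2 (bipartiteMarginal (Pz z) i uu vv)) := by
  classical
  have hN1 : (1:ℝ) ≤ (n:ℝ) := by exact_mod_cast hn
  have hε0 : 0 < ε := lt_of_lt_of_le (by positivity) hε1
  by_cases hcase : 1/4 ≤ ε
  -- Trivial case: the box itself is already local at every marginal.
  · refine ⟨1, fun _ => 1, fun _ => prodBox n (fun _ => ε), ?_, ?_, ?_, ?_⟩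
    · intro z; norm_num
    · intro z; exact NSBox_prodBox n _ (fun i => ⟨le_of_lt hε0, by linarith⟩)
    · intro x y u v
      rw [Fin.sum_univ_one, one_mul]; rfl
    · intro z _
      refine ⟨⟨0, hn⟩, fun uu vv => ?_⟩
      have hm : bipartiteMarginal (prodBox n (fun _ => ε)) ⟨0, hn⟩ uu vv = Peps ε := by
        funext a b c d; exact marginal_prodBox n _ _ uu vv a b c d
      rw [hm]
      exact isLocal2_Peps hcase hε2
  -- Main case: `ε < 1/4`.
  · push_neg at hcase
    set p' : ℝ := 2 * ε with hp'
    set q' : ℝ := 1 - 2 * ε with hq'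
    have hp'0 : 0 < p' := by simp [hp']; linarith
    have hq'0 : 0 < q' := by simp [hq']; linarith
    have hq'1 : q' < 1 := by simp [hq']; linarith
    have hpq : p' + q' = 1 := by simp [hp', hq']
    -- the iid weight of a string `s`
    set μ : (Fin n → Bool) → ℝ := fun s => ∏ j, (if s j then p' else q') with hμ
    have hμpos : ∀ s, 0 < μ s := fun s =>
      Finset.prod_pos fun j _ => by split <;> assumption
    -- "first one at z"
    set E : Fin n → (Fin n → Bool) → Prop :=
      fun z s => s z = true ∧ ∀ j, j < z → s j = false with hE
    set zeroS : Fin n → Bool := fun _ => false with hzeroS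
    set M : Fin n → ℝ := fun z => ∑ s, if E z s then μ s else 0 with hM
    set Q : ℝ := q' ^ n with hQdef
    have hQ0 : 0 < Q := pow_pos hq'0 n
    have hQhalf : Q ≤ 1/2 := by
      apply crux n hn q' (le_of_lt hq'0)
      rw [le_div_iff₀ (by positivity)]
      rw [div_le_iff₀ (by positivity)] at hε1
      simp only [hq']
      nlinarith
    have hD0 : (0:ℝ) < 1 - Q := by linarith
    set aw : Fin n → ℝ := fun z => (Q / (1 - Q)) * M z with haw
    set pp : Fin n → ℝ := fun z => M z / (1 - Q) with hpp
    -- positivity of M.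
    have hMpos : ∀ z, 0 < M z := by
      intro z
      have hsz : E z (fun j => decide (j = z)) :=
        ⟨by simp, fun j hj => decide_eq_false (Fin.ne_of_lt hj)⟩
      have h1 : (if E z (fun j => decide (j = z)) then μ (fun j => decide (j = z)) else 0)
          ≤ M z := by
        show _ ≤ ∑ s : Fin n → Bool, if E z s then μ s else 0
        exact Finset.single_le_sum (f := fun s => if E z s then μ s else 0)
          (fun s _ => by split; exacts [le_of_lt (hμpos s), le_rfl])
          (Finset.mem_univ (fun j => decide (j = z)))
      rw [if_pos hsz] at h1
      exact lt_of_lt_of_le (hμpos _) h1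
    have hppos : ∀ z, 0 < pp z := fun z => div_pos (hMpos z) hD0
    have hawpos : ∀ z, 0 ≤ aw z := fun z =>
      mul_nonneg (le_of_lt (div_pos hQ0 hD0)) (le_of_lt (hMpos z))
    -- numerators and conditional distributions over strings
    set W : Fin n → (Fin n → Bool) → ℝ :=
      fun z s => (if E z s then μ s else 0) + (if s = zeroS then aw z else 0) with hW
    set ν : Fin n → (Fin n → Bool) → ℝ := fun z s => W z s / pp z with hν
    set e : (Fin n → Bool) → Fin n → ℝ := fun s j => if s j then 1/2 else 0 with he
    set Pz : Fin n → (Fin n → Bool) → (Fin n → Bool) → (Fin n → Bool) → (Fin n → Bool) → ℝ :=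
      fun z x y u v => ∑ s, ν z s * prodBox n (e s) x y u v with hPz
    -- basic facts
    have hWnn : ∀ z s, 0 ≤ W z s := by
      intro z s
      apply add_nonneg
      · split; exacts [le_of_lt (hμpos s), le_rfl]
      · split; exacts [hawpos z, le_rfl]
    have hWsum : ∀ z, ∑ s, W z s = pp z := by
      intro z
      rw [Finset.sum_add_distrib]
      have h1 : ∑ s : Fin n → Bool, (if s = zeroS then aw z else 0) = aw z := by
        rw [Finset.sum_ite_eq' Finset.univ zeroS (fun _ => aw z)]
        simp
      rw [h1]
      show M z + aw z = pp z
      simp only [haw, hpp]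
      field_simp
      ring
    have hνnn : ∀ z s, 0 ≤ ν z s := fun z s => div_nonneg (hWnn z s) (le_of_lt (hppos z))
    have hνsum : ∀ z, ∑ s, ν z s = 1 := by
      intro z
      rw [hν]
      simp only
      rw [← Finset.sum_div, hWsum z, div_self (ne_of_gt (hppos z))]
    have hebound : ∀ s, ∀ i, 0 ≤ e s i ∧ e s i ≤ 1 := by
      intro s i; constructor <;> · simp only [he]; split <;> norm_num
    -- uniqueness / existence of the first one
    have hEuniq : ∀ s z z', E z s → E z' s → z = z' := by
      intro s z z' h1 h2
      rcases lt_trichotomy z z' with h | h | h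
      · exact absurd h1.1 (by rw [h2.2 z h]; simp)
      · exact h
      · exact absurd h2.1 (by rw [h1.2 z' h]; simp)
    have hEex : ∀ s : Fin n → Bool, s ≠ zeroS → ∃ z, E z s := by
      intro s hs
      have hne : (Finset.univ.filter (fun j => s j = true)).Nonempty := by
        rw [Finset.filter_nonempty_iff]
        by_contra hcon
        push_neg at hcon
        apply hs
        funext j
        have := hcon j (Finset.mem_univ j)
        simp [hzeroS]
        simpa using this
      refine ⟨(Finset.univ.filter (fun j => s j = true)).min' hne, ?_, ?_⟩
      · have := (Finset.univ.filter (fun j => s j = true)).min'_mem hne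
        simpa using this
      · intro j hj
        by_contra hcon
        have hjmem : j ∈ Finset.univ.filter (fun j => s j = true) := by
          simp [Bool.not_eq_false] at hcon ⊢
          exact hcon
        exact absurd (Finset.min'_le _ j hjmem) (not_le.mpr hj)
    -- the column sums of W
    have hWcol : ∀ s, ∑ z, W z s = μ s := by
      intro s
      rw [Finset.sum_add_distrib]
      by_cases hs : s = zeroS
      · have h1 : ∀ z, (if E z s then μ s else 0) = 0 := by
          intro z
          rw [if_neg]
          intro hEz
          rw [hs] at hEz
          exact absurd hEz.1 (by simp [hzeroS])
        simp only [h1, Finset.sum_const_zero, if_pos hs, zero_add]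
        have h2 : ∑ z, M z = 1 - Q := by
          have swap : ∑ z, M z = ∑ s : Fin n → Bool, ∑ z, (if E z s then μ s else 0) := by
            rw [hM]; exact Finset.sum_comm
          have inner : ∀ s : Fin n → Bool, (∑ z, if E z s then μ s else 0)
              = μ s - (if s = zeroS then μ s else 0) := by
            intro s
            by_cases h : s = zeroS
            · rw [if_pos h]
              have : ∀ z, (if E z s then μ s else 0) = 0 := by
                intro z; rw [if_neg]
                intro hEz; rw [h] at hEz; exact absurd hEz.1 (by simp [hzeroS])
              simp [this]
            · rw [if_neg h]
              obtain ⟨z₀, hz₀⟩ := hEex s h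
              rw [Finset.sum_eq_single z₀]
              · rw [if_pos hz₀]; ring
              · intro z _ hz
                rw [if_neg (fun hEz => hz (hEuniq s z z₀ hEz hz₀))]
              · intro h'; exact absurd (Finset.mem_univ z₀) h'
          rw [swap, Finset.sum_congr rfl (fun s _ => inner s), Finset.sum_sub_distrib]
          have htot : ∑ s : Fin n → Bool, μ s = 1 := by
            have h := (Finset.prod_univ_sum (fun _ : Fin n => (Finset.univ : Finset Bool))
              (fun (_ : Fin n) (t : Bool) => if t then p' else q')).symm
            rw [Fintype.piFinset_univ] at h
            rw [hμ]
            simp only at h ⊢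
            rw [h]
            simp [Fintype.sum_bool, hpq]
          have hμzero : μ zeroS = Q := by
            show (∏ j : Fin n, if zeroS j then p' else q') = q' ^ n
            simp [hzeroS]
          have hz : ∑ s : Fin n → Bool, (if s = zeroS then μ s else 0) = Q := by
            rw [Finset.sum_ite_eq' Finset.univ zeroS μ]
            simpa using hμzero
          rw [htot, hz]
        rw [← Finset.mul_sum, h2]
        have hμz : μ s = Q := by
          rw [hs]
          show (∏ j : Fin n, if zeroS j then p' else q') = q' ^ n
          simp [hzeroS]
        rw [hμz]
        field_simp
      · have h2 : ∑ z, (if s = zeroS then aw z else 0) = 0 := by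
          simp [hs]
        rw [h2, add_zero]
        obtain ⟨z₀, hz₀⟩ := hEex s hs
        rw [Finset.sum_eq_single z₀]
        · rw [if_pos hz₀]
        · intro z _ hz
          rw [if_neg (fun hEz => hz (hEuniq s z z₀ hEz hz₀))]
        · intro h'; exact absurd (Finset.mem_univ z₀) h'
    -- now conclude
    refine ⟨n, pp, Pz, fun z => le_of_lt (hppos z), ?_, ?_, ?_⟩
    · intro z
      exact NSBox_sum (ν z) (fun s => prodBox n (e s)) (hνnn z) (hνsum z)
        (fun s => NSBox_prodBox n (e s) (hebound s))
    · -- the mixture property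
      intro x y u v
      have h1 : ∀ z, pp z * Pz z x y u v = ∑ s, W z s * prodBox n (e s) x y u v := by
        intro z
        simp only [hPz]
        rw [Finset.mul_sum]
        refine Finset.sum_congr rfl fun s _ => ?_
        simp only [hν]
        have hr : pp z * (W z s / pp z * prodBox n (e s) x y u v)
            = (pp z / pp z) * (W z s * prodBox n (e s) x y u v) := by ring
        rw [hr, div_self (ne_of_gt (hppos z)), one_mul]
      calc ∑ z, pp z * Pz z x y u v
          = ∑ z, ∑ s, W z s * prodBox n (e s) x y u v :=
            Finset.sum_congr rfl fun z _ => h1 z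
        _ = ∑ s, ∑ z, W z s * prodBox n (e s) x y u v := Finset.sum_comm
        _ = ∑ s, μ s * prodBox n (e s) x y u v := by
            refine Finset.sum_congr rfl fun s _ => ?_
            rw [← Finset.sum_mul, hWcol s]
        _ = ∏ i, Peps ε (x i) (y i) (u i) (v i) := by
            have expand : ∀ i : Fin n, Peps ε (x i) (y i) (u i) (v i)
                = ∑ t : Bool, (if t then p' else q')
                    * Peps (if t then 1/2 else 0) (x i) (y i) (u i) (v i) := by
              intro i
              rw [Fintype.sum_bool]
              simp only [if_true, Bool.false_eq_true, if_false, hp', hq']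
              have hmix := Peps_mix (2*ε) (x i) (y i) (u i) (v i)
              have h2 : (2 * ε) / 2 = ε := by ring
              rw [h2] at hmix
              linarith [hmix]
            rw [Finset.prod_congr rfl (fun i _ => expand i)]
            have h := Finset.prod_univ_sum (fun _ : Fin n => (Finset.univ : Finset Bool))
              (fun (i : Fin n) (t : Bool) => (if t then p' else q')
                * Peps (if t then 1/2 else 0) (x i) (y i) (u i) (v i))
            rw [Fintype.piFinset_univ] at h
            rw [h]
            refine (Finset.sum_congr rfl fun s _ => ?_).symm
            rw [Finset.prod_mul_distrib]
            rfl
    · -- locality of the z-th marginal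
      intro z hz
      refine ⟨z, fun uu vv => ?_⟩
      have hmarg : bipartiteMarginal (Pz z) z uu vv = Peps ((1 - Q)/2) := by
        funext a b c d
        have hlin : bipartiteMarginal (Pz z) z uu vv a b c d
            = ∑ s, ν z s * bipartiteMarginal (prodBox n (e s)) z uu vv a b c d := by
          unfold bipartiteMarginal
          rw [hPz]
          simp only
          calc ∑ x : Fin n → Bool, ∑ y : Fin n → Bool, (if x z = a ∧ y z = b then
                  ∑ s, ν z s * prodBox n (e s) x y (Function.update uu z c) (Function.update vv z d) else 0)
              = ∑ x : Fin n → Bool, ∑ y : Fin n → Bool, ∑ s, (if x z = a ∧ y z = b then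
                  ν z s * prodBox n (e s) x y (Function.update uu z c) (Function.update vv z d) else 0) := by
                refine Finset.sum_congr rfl fun x _ => Finset.sum_congr rfl fun y _ => ?_
                split
                · rfl
                · rw [Finset.sum_const_zero]
            _ = ∑ x : Fin n → Bool, ∑ s, ∑ y : Fin n → Bool, (if x z = a ∧ y z = b then
                  ν z s * prodBox n (e s) x y (Function.update uu z c) (Function.update vv z d) else 0) :=
                Finset.sum_congr rfl fun x _ => Finset.sum_comm
            _ = ∑ s, ∑ x : Fin n → Bool, ∑ y : Fin n → Bool, (if x z = a ∧ y z = b then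
                  ν z s * prodBox n (e s) x y (Function.update uu z c) (Function.update vv z d) else 0) :=
                Finset.sum_comm
            _ = ∑ s, ν z s * ∑ x : Fin n → Bool, ∑ y : Fin n → Bool, (if x z = a ∧ y z = b then
                  prodBox n (e s) x y (Function.update uu z c) (Function.update vv z d) else 0) := by
                refine Finset.sum_congr rfl fun s _ => ?_
                rw [Finset.mul_sum]
                refine Finset.sum_congr rfl fun x _ => ?_
                rw [Finset.mul_sum]
                refine Finset.sum_congr rfl fun y _ => ?_
                split
                · rfl
                · rw [mul_zero]
        rw [hlin]
        have hterm : ∀ s, ν z s * bipartiteMarginal (prodBox n (e s)) z uu vv a b c d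
            = ((if E z s then μ s else 0) * Peps (1/2) a b c d
                + (if s = zeroS then aw z else 0) * Peps 0 a b c d) / pp z := by
          intro s
          rw [marginal_prodBox n (e s) z uu vv a b c d]
          simp only [hν, hW, he]
          by_cases hE1 : E z s
          · have hsz : s z = true := hE1.1
            have hsnz : s ≠ zeroS := by
              intro h; rw [h] at hsz; simp [hzeroS] at hsz
            simp only [if_pos hE1, if_neg hsnz, hsz, if_true]
            ring
          · by_cases hs : s = zeroS
            · have hsz : s z = false := by rw [hs]
              simp only [if_neg hE1, if_pos hs, hsz]
              norm_num
              try ring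
            · simp only [if_neg hE1, if_neg hs]
              ring
        rw [Finset.sum_congr rfl (fun s _ => hterm s), ← Finset.sum_div,
          Finset.sum_add_distrib, ← Finset.sum_mul, ← Finset.sum_mul]
        have h0 : (∑ i : Fin n → Bool, if E z i then μ i else 0) = M z := rfl
        rw [h0]
        have h1 : ∑ s : Fin n → Bool, (if s = zeroS then aw z else 0) = aw z := by
          rw [Finset.sum_ite_eq' Finset.univ zeroS (fun _ => aw z)]
          simp
        rw [h1]
        have hMpp : M z / pp z = 1 - Q := by
          rw [div_eq_iff (ne_of_gt (hppos z))]
          simp only [hpp]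
          field_simp
        have hawpp : aw z / pp z = Q := by
          rw [div_eq_iff (ne_of_gt (hppos z))]
          simp only [haw, hpp]
          field_simp
          try ring
        have final : (M z * Peps (1/2) a b c d + aw z * Peps 0 a b c d) / pp z
            = (1 - Q) * Peps (1/2) a b c d + (1 - (1 - Q)) * Peps 0 a b c d := by
          have hexp : (M z * Peps (1/2) a b c d + aw z * Peps 0 a b c d) / pp z
              = (M z / pp z) * Peps (1/2) a b c d + (aw z / pp z) * Peps 0 a b c d := by
            ring
          rw [hexp, hMpp, hawpp]
          ring
        rw [final, Peps_mix (1 - Q) a b c d]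
      rw [hmarg]
      exact isLocal2_Peps (by linarith) (by linarith)
end
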